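/- arXiv:1909.05985 — 10 statements merged into one kernel-verified Lean document; each statement's English description precedes it below -/
import Mathlib

section
/- For all integers k, r, m ≥ 1 with k ≤ m, there exists an integer n > m such that for every coloring c : [n]^k → r, there is a subset N ⊆ {0,...,n-1} of cardinality m such that c is constant on the k-element subsets of N. -/
theorem inf_ramsey (r : ℕ) : ∀ (k : ℕ) (c : Finset ℕ → Fin r) (S : Set ℕ), S.Infinite →
    ∃ H : Set ℕ, H ⊆ S ∧ H.Infinite ∧ ∀ s t : Finset ℕ, ↑s ⊆ H → ↑t ⊆ H →
      s.card = k → t.card = k → c s = c t := by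
  intro k
  induction k with
  | zero =>
    intro c S hS
    refine ⟨S, subset_rfl, hS, fun s t _ _ hs ht => ?_⟩
    rw [Finset.card_eq_zero] at hs ht
    rw [hs, ht]
  | succ k ih =>
    intro c S hS
    -- step function
    have step : ∀ T : {T : Set ℕ // T.Infinite}, ∃ p : ℕ × {T : Set ℕ // T.Infinite},
        p.1 ∈ T.1 ∧ p.2.1 ⊆ T.1 ∧ (∀ x ∈ p.2.1, p.1 < x) ∧
        (∀ s t : Finset ℕ, ↑s ⊆ p.2.1 → ↑t ⊆ p.2.1 → s.card = k → t.card = k →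
          c (insert p.1 s) = c (insert p.1 t)) := by
      rintro ⟨T, hT⟩
      have hne : T.Nonempty := hT.nonempty
      set a := sInf T with ha
      have haT : a ∈ T := Nat.sInf_mem hne
      have hT' : (T \ Set.Iic a).Infinite := hT.diff (Set.finite_Iic a)
      obtain ⟨H, hHsub, hHinf, hHhom⟩ := ih (fun s => c (insert a s)) (T \ Set.Iic a) hT'
      refine ⟨⟨a, H, hHinf⟩, haT, fun x hx => (hHsub hx).1, fun x hx => ?_, hHhom⟩
      have := (hHsub hx).2
      simpa using this
    choose F hF1 hF2 hF3 hF4 using step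
    set seq : ℕ → {T : Set ℕ // T.Infinite} :=
      fun n => Nat.rec (⟨S, hS⟩ : {T : Set ℕ // T.Infinite}) (fun _ p => (F p).2) n with hseq
    set a : ℕ → ℕ := fun n => (F (seq n)).1 with haa
    have hseq_succ : ∀ n, seq (n + 1) = (F (seq n)).2 := fun n => rfl
    have hsub : ∀ n, (seq (n+1)).1 ⊆ (seq n).1 := fun n => by
      rw [hseq_succ]; exact hF2 (seq n)
    have hmono : ∀ i j, i ≤ j → (seq j).1 ⊆ (seq i).1 := by
      intro i j hij
      induction j with
      | zero => simp_all
      | succ j ihj =>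
        rcases Nat.lt_or_ge i (j+1) with h | h
        · exact (ihj (Nat.lt_succ_iff.mp h)).trans' (hsub j) |>.trans subset_rfl
        · have : i = j + 1 := le_antisymm hij h
          subst this; exact subset_rfl
    have ha_mem : ∀ n, a n ∈ (seq n).1 := fun n => hF1 (seq n)
    have ha_lt : ∀ n, ∀ x ∈ (seq (n+1)).1, a n < x := fun n => by
      rw [hseq_succ]; exact hF3 (seq n)
    have ha_strict : StrictMono a := strictMono_nat_of_lt_succ (fun n =>
      ha_lt n (a (n+1)) (ha_mem (n+1)))
    have ha_memS : ∀ n, a n ∈ S := fun n => hmono 0 n (Nat.zero_le n) (ha_mem n)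
    have ha_mem_later : ∀ i j, i < j → a j ∈ (seq (i+1)).1 := fun i j hij =>
      hmono (i+1) j hij (ha_mem j)
    -- fixed k-subset witnesses
    have hw : ∀ n : ℕ, ∃ w : Finset ℕ, ↑w ⊆ (seq (n+1)).1 ∧ w.card = k := fun n =>
      (seq (n+1)).2.exists_subset_card_eq k
    choose w hw1 hw2 using hw
    set v : ℕ → Fin r := fun n => c (insert (a n) (w n)) with hv
    have hkey : ∀ n (s : Finset ℕ), ↑s ⊆ (seq (n+1)).1 → s.card = k →
        c (insert (a n) s) = v n := by
      intro n s hs hsk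
      have := hF4 (seq n) s (w n)
      rw [← hseq_succ] at this
      exact this hs (hw1 n) hsk (hw2 n)
    -- pigeonhole on colors
    have : ∃ u : Fin r, {n | v n = u}.Infinite := by
      by_contra h
      push_neg at h
      have : (Set.univ : Set ℕ).Finite := by
        have : (Set.univ : Set ℕ) = ⋃ u : Fin r, {n | v n = u} := by
          ext n; simp
        rw [this]
        exact Set.finite_iUnion h
      exact Set.infinite_univ this
    obtain ⟨u, hu⟩ := this
    refine ⟨a '' {n | v n = u}, ?_, ?_, ?_⟩
    · rintro x ⟨n, _, rfl⟩; exact ha_memS n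
    · exact hu.image (ha_strict.injective.injOn)
    · -- every (k+1)-subset of the image has color u
      have main : ∀ s : Finset ℕ, ↑s ⊆ a '' {n | v n = u} → s.card = k + 1 → c s = u := by
        intro s hs hsk
        have hne : s.Nonempty := Finset.card_pos.mp (by omega)
        set b := s.min' hne with hb
        have hbs : b ∈ s := s.min'_mem hne
        obtain ⟨i, hvi, hib⟩ := hs hbs
        have herase : ↑(s.erase b) ⊆ (seq (i+1)).1 := by
          intro x hx
          have hxs : x ∈ s := Finset.mem_of_mem_erase (by exact_mod_cast hx)
          have hxb : x ≠ b := Finset.ne_of_mem_erase (by exact_mod_cast hx)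
          obtain ⟨j, _, hja⟩ := hs hxs
          have hbx : b < x := lt_of_le_of_ne (s.min'_le x hxs) (Ne.symm hxb)
          have hij : i < j := by
            by_contra hcon
            push_neg at hcon
            have := ha_strict.le_iff_le.mpr hcon
            omega
          rw [← hja]; exact ha_mem_later i j hij
        have hcard : (s.erase b).card = k := by
          rw [Finset.card_erase_of_mem hbs, hsk]; omega
        have hins : insert b (s.erase b) = s := Finset.insert_erase hbs
        calc c s = c (insert (a i) (s.erase b)) := by
              conv_lhs => rw [← hins, ← hib]
              rw [hib]
          _ = v i := hkey i _ herase hcard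
          _ = u := hvi
      intro s t hs ht hsk htk
      rw [main s hs hsk, main t ht htk]

/-- The Finite Ramsey Theorem: for all `k, r, m ≥ 1` with `k ≤ m` there is an
`n > m` such that every coloring of the `k`-element subsets of `{0,…,n-1}` into
`r` colors is constant on the `k`-element subsets of some `N ⊆ {0,…,n-1}` of
cardinality `m`. -/
theorem finite_ramsey (k r m : ℕ) (hk : 1 ≤ k) (hr : 1 ≤ r) (hm : 1 ≤ m)
    (hkm : k ≤ m) :
    ∃ n : ℕ, m < n ∧ ∀ c : Finset ℕ → Fin r,
      ∃ N : Finset ℕ, N ⊆ Finset.range n ∧ N.card = m ∧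
        ∀ s t : Finset ℕ, s ⊆ N → t ⊆ N → s.card = k → t.card = k →
          c s = c t := by
  by_contra hcon
  push_neg at hcon
  -- for each n, a bad coloring for n + m + 1
  have bad : ∀ n : ℕ, ∃ g : Finset ℕ → Fin r,
      ∀ N : Finset ℕ, N ⊆ Finset.range (n + m + 1) → N.card = m →
        ∃ s t : Finset ℕ, s ⊆ N ∧ t ⊆ N ∧ s.card = k ∧ t.card = k ∧ g s ≠ g t := by
    intro n
    obtain ⟨c, hc⟩ := hcon (n + m + 1) (by omega)
    exact ⟨c, fun N h1 h2 => by
      obtain ⟨s, t, hs, ht, hsk, htk, hne⟩ := hc N h1 h2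
      exact ⟨s, t, hs, ht, hsk, htk, hne⟩⟩
  choose g hg using bad
  -- a nonprincipal ultrafilter on ℕ
  obtain ⟨U, hU⟩ := Ultrafilter.exists_le (Filter.cofinite : Filter ℕ)
  -- for each finset s, the majority color along U
  have maj : ∀ s : Finset ℕ, ∃ u : Fin r, {n | g n s = u} ∈ U := by
    intro s
    by_contra h
    push_neg at h
    have hcompl : ∀ u : Fin r, {n | g n s = u}ᶜ ∈ U := fun u =>
      (Ultrafilter.compl_mem_iff_notMem.mpr (h u))
    have : (⋂ u : Fin r, {n | g n s = u}ᶜ) ∈ U := by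
      exact (Filter.iInter_mem).mpr hcompl
    have hempty : (⋂ u : Fin r, {n | g n s = u}ᶜ) = ∅ := by
      ext n
      simp only [Set.mem_iInter, Set.mem_compl_iff, Set.mem_setOf_eq, Set.mem_empty_iff_false,
        iff_false, not_forall, not_not]
      exact ⟨g n s, rfl⟩
    rw [hempty] at this
    exact U.empty_notMem this
  choose c hc using maj
  -- infinite Ramsey for c
  obtain ⟨H, _, hHinf, hhom⟩ := inf_ramsey r k c Set.univ Set.infinite_univ
  obtain ⟨N, hNH, hNm⟩ := hHinf.exists_subset_card_eq m
  -- the set of n where g n agrees with c on all subsets of N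
  have hA : (⋂ s ∈ N.powerset, {n | g n s = c s}) ∈ U :=
    (Filter.biInter_finset_mem _).mpr (fun s _ => hc s)
  have hAinf : (⋂ s ∈ N.powerset, {n | g n s = c s}).Infinite := by
    intro hfin
    have h1 := hU (hfin.compl_mem_cofinite)
    have h2 := Filter.inter_mem hA h1
    rw [Set.inter_compl_self] at h2
    exact U.empty_notMem h2
  obtain ⟨n, hnA, hn⟩ := hAinf.exists_gt (N.sup id)
  have hNrange : N ⊆ Finset.range (n + m + 1) := by
    intro x hx
    have : x ≤ N.sup id := Finset.le_sup (f := id) hx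
    exact Finset.mem_range.mpr (by omega)
  obtain ⟨s, t, hs, ht, hsk, htk, hne⟩ := hg n N hNrange hNm
  have hags : g n s = c s := by
    have := Set.mem_iInter₂.mp hnA s (Finset.mem_powerset.mpr hs)
    exact this
  have hagt : g n t = c t := by
    have := Set.mem_iInter₂.mp hnA t (Finset.mem_powerset.mpr ht)
    exact this
  have : c s = c t := by
    refine hhom s t ?_ ?_ hsk htk
    · exact fun x hx => hNH (hs hx)
    · exact fun x hx => hNH (ht hx)
  exact hne (by rw [hags, hagt, this])
end

section
/- For every clopen subset 𝒞 of the space [ℕ]^ω of infinite subsets of ℕ (with the topology inherited from the product topology on 2^ℕ), there exists an infinite set X ⊆ ℕ such that either every infinite subset of X belongs to 𝒞 or no infinite subset of X belongs to 𝒞. -/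
/-- The space `[ℕ]^ω` of infinite subsets of `ℕ`, presented as characteristic
functions in `2^ℕ` with the product topology. -/
def InfSubsets : Type := {f : ℕ → Bool // {n : ℕ | f n = true}.Infinite}

instance : TopologicalSpace InfSubsets :=
  instTopologicalSpaceSubtype

namespace NW

open Classical in
/-- Characteristic function of a set of naturals. -/
noncomputable def chi (X : Set ℕ) : ℕ → Bool := fun n => if n ∈ X then true else false

lemma chi_eq (X : Set ℕ) (n : ℕ) : chi X n = true ↔ n ∈ X := by
  by_cases h : n ∈ X <;> simp [chi, h]

/-- The set of naturals coded by an element of `InfSubsets`. -/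
def memSet (B : InfSubsets) : Set ℕ := {n | B.1 n = true}

lemma memSet_chi (X : Set ℕ) : {n | chi X n = true} = X := by
  ext n; exact chi_eq X n

noncomputable def ofSet (X : Set ℕ) (hX : X.Infinite) : InfSubsets :=
  ⟨chi X, by rw [memSet_chi]; exact hX⟩

lemma memSet_ofSet (X : Set ℕ) (hX : X.Infinite) : memSet (ofSet X hX) = X :=
  memSet_chi X

lemma eq_of_memSet {B B' : InfSubsets} (h : memSet B = memSet B') : B = B' := by
  apply Subtype.ext; funext n
  have h' := Set.ext_iff.mp h n
  simp only [memSet, Set.mem_setOf_eq] at h'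
  cases hb : B.1 n <;> cases hb' : B'.1 n <;> simp [hb, hb'] at h' ⊢

/-- `X` is (the set of) a member of `C`. -/
def InC (C : Set InfSubsets) (X : Set ℕ) : Prop :=
  ∃ B : InfSubsets, memSet B = X ∧ B ∈ C

def above (s : Finset ℕ) (x : ℕ) : Prop := ∀ y ∈ s, y < x

/-- `A` accepts `s`: every infinite subset of `A` lying above `s`, together
with `s`, is in `C`. -/
def accepts (C : Set InfSubsets) (s : Finset ℕ) (A : Set ℕ) : Prop :=
  ∀ B : Set ℕ, B.Infinite → B ⊆ A → (∀ b ∈ B, above s b) → InC C (↑s ∪ B)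

/-- `A` rejects `s`: no infinite subset of `A` accepts `s`. -/
def rejects (C : Set InfSubsets) (s : Finset ℕ) (A : Set ℕ) : Prop :=
  ∀ B : Set ℕ, B.Infinite → B ⊆ A → ¬ accepts C s B

lemma accepts_mono {C s} {A A' : Set ℕ} (h : A' ⊆ A) (ha : accepts C s A) :
    accepts C s A' := fun B h1 h2 h3 => ha B h1 (h2.trans h) h3

lemma rejects_mono {C s} {A A' : Set ℕ} (h : A' ⊆ A) (ha : rejects C s A) :
    rejects C s A' := fun B h1 h2 => ha B h1 (h2.trans h)

lemma decide_one (C : Set InfSubsets) (s : Finset ℕ) (A : Set ℕ) (hA : A.Infinite) :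
    ∃ A', A' ⊆ A ∧ A'.Infinite ∧ (accepts C s A' ∨ rejects C s A') := by
  by_cases h : rejects C s A
  · exact ⟨A, subset_rfl, hA, Or.inr h⟩
  · unfold rejects at h
    push_neg at h
    obtain ⟨B, h1, h2, h3⟩ := h
    exact ⟨B, h2, h1, Or.inl h3⟩

lemma decide_many (C : Set InfSubsets) (T : Finset (Finset ℕ)) :
    ∀ A : Set ℕ, A.Infinite →
      ∃ A', A' ⊆ A ∧ A'.Infinite ∧ ∀ s ∈ T, accepts C s A' ∨ rejects C s A' := by
  induction T using Finset.induction_on with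
  | empty => exact fun A hA => ⟨A, subset_rfl, hA, by simp⟩
  | @insert a T ha ih =>
    intro A hA
    obtain ⟨A1, h1, h2, h3⟩ := ih A hA
    obtain ⟨A2, g1, g2, g3⟩ := decide_one C a A1 h2
    refine ⟨A2, g1.trans h1, g2, ?_⟩
    intro s hs
    rcases Finset.mem_insert.mp hs with rfl | hs
    · exact g3
    · exact (h3 s hs).imp (accepts_mono g1) (rejects_mono g1)

/-- The tail of `X0` above `s`. -/
def tail (X0 : Set ℕ) (s : Finset ℕ) : Set ℕ := {x ∈ X0 | above s x}

/-- `X0` decides each of its finite subsets. -/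
def Dec (C : Set InfSubsets) (X0 : Set ℕ) : Prop :=
  ∀ s : Finset ℕ, ↑s ⊆ X0 → accepts C s (tail X0 s) ∨ rejects C s (tail X0 s)

def R (C : Set InfSubsets) (X0 : Set ℕ) (s : Finset ℕ) : Prop :=
  rejects C s (tail X0 s)

/-! ### Phase 1: fusion to a set deciding all of its finite subsets -/

def St1 (C : Set InfSubsets) : Type :=
  {p : Finset ℕ × Set ℕ // p.2.Infinite ∧ (∀ x ∈ p.1, ∀ y ∈ p.2, x < y) ∧
    ∀ s ∈ p.1.powerset, accepts C s p.2 ∨ rejects C s p.2}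

lemma exists_p1 (C : Set InfSubsets) : ∃ p : St1 C, p.1.1 = ∅ := by
  obtain ⟨A0, -, hinf, hdec⟩ := decide_one C ∅ Set.univ Set.infinite_univ
  refine ⟨⟨(∅, A0), hinf, by simp, ?_⟩, rfl⟩
  intro s hs
  rw [Finset.mem_powerset, Finset.subset_empty] at hs
  subst hs; exact hdec

lemma step1 (C : Set InfSubsets) (p : St1 C) :
    ∃ q : St1 C, q.1.1 = insert (sInf p.1.2) p.1.1 ∧ q.1.2 ⊆ p.1.2 ∧
      ∀ y ∈ q.1.2, sInf p.1.2 < y := by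
  obtain ⟨⟨F, A⟩, hAinf, horder, hdec⟩ := p
  set a := sInf A with ha_def
  have haA : a ∈ A := Nat.sInf_mem hAinf.nonempty
  have hA1 : (A \ Set.Iic a).Infinite := hAinf.diff (Set.finite_Iic a)
  obtain ⟨A', hsub, hinf, hdec'⟩ := decide_many C (insert a F).powerset _ hA1
  have hsubA : A' ⊆ A := hsub.trans Set.diff_subset
  have hgt : ∀ y ∈ A', a < y := by
    intro y hy
    have := hsub hy
    simpa [Set.mem_diff, Set.mem_Iic, not_le] using this.2
  refine ⟨⟨(insert a F, A'), hinf, ?_, hdec'⟩, rfl, hsubA, hgt⟩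
  intro x hx y hy
  rcases Finset.mem_insert.mp hx with rfl | hx
  · exact hgt y hy
  · exact horder x hx y (hsubA hy)

noncomputable def chain1 (C : Set InfSubsets) (p0 : St1 C) : ℕ → St1 C
  | 0 => p0
  | n + 1 => (step1 C (chain1 C p0 n)).choose

lemma chain1_succ (C : Set InfSubsets) (p0 : St1 C) (n : ℕ) :
    chain1 C p0 (n + 1) = (step1 C (chain1 C p0 n)).choose := rfl

noncomputable def aSeq (C : Set InfSubsets) (p0 : St1 C) (n : ℕ) : ℕ :=
  sInf (chain1 C p0 n).1.2

lemma chain1_spec (C : Set InfSubsets) (p0 : St1 C) (n : ℕ) :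
    (chain1 C p0 (n+1)).1.1 = insert (aSeq C p0 n) (chain1 C p0 n).1.1 ∧
    (chain1 C p0 (n+1)).1.2 ⊆ (chain1 C p0 n).1.2 ∧
    ∀ y ∈ (chain1 C p0 (n+1)).1.2, aSeq C p0 n < y := by
  rw [chain1_succ]
  exact (step1 C (chain1 C p0 n)).choose_spec

lemma aSeq_mem (C : Set InfSubsets) (p0 : St1 C) (n : ℕ) :
    aSeq C p0 n ∈ (chain1 C p0 n).1.2 :=
  Nat.sInf_mem (chain1 C p0 n).2.1.nonempty

lemma chain1_anti (C : Set InfSubsets) (p0 : St1 C) {n m : ℕ} (h : n ≤ m) :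
    (chain1 C p0 m).1.2 ⊆ (chain1 C p0 n).1.2 := by
  induction m, h using Nat.le_induction with
  | base => exact subset_rfl
  | succ m hm ih => exact ((chain1_spec C p0 m).2.1).trans ih

lemma aSeq_strictMono (C : Set InfSubsets) (p0 : St1 C) : StrictMono (aSeq C p0) := by
  apply strictMono_nat_of_lt_succ
  intro n
  exact (chain1_spec C p0 n).2.2 _ (aSeq_mem C p0 (n+1))

lemma aSeq_mem_F (C : Set InfSubsets) (p0 : St1 C) :
    ∀ n i, i < n → aSeq C p0 i ∈ (chain1 C p0 n).1.1 := by
  intro n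
  induction n with
  | zero => omega
  | succ n ih =>
    intro i hi
    rw [(chain1_spec C p0 n).1]
    rcases Nat.lt_succ_iff_lt_or_eq.mp hi with hi | rfl
    · exact Finset.mem_insert_of_mem (ih i hi)
    · exact Finset.mem_insert_self _ _

lemma phase1 (C : Set InfSubsets) : ∃ X0 : Set ℕ, X0.Infinite ∧ Dec C X0 := by
  obtain ⟨p0, hp0⟩ := exists_p1 C
  refine ⟨Set.range (aSeq C p0), Set.infinite_range_of_injective
    (aSeq_strictMono C p0).injective, ?_⟩
  intro s hs
  -- find n such that s ⊆ F_n and tail ⊆ A_n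
  have key : ∃ n, s ∈ (chain1 C p0 n).1.1.powerset ∧
      tail (Set.range (aSeq C p0)) s ⊆ (chain1 C p0 n).1.2 := by
    rcases s.eq_empty_or_nonempty with rfl | hne
    · refine ⟨0, by simp [hp0], ?_⟩
      rintro x ⟨⟨m, rfl⟩, -⟩
      exact chain1_anti C p0 (Nat.zero_le m) (aSeq_mem C p0 m)
    · obtain ⟨i, hi⟩ := hs (s.max'_mem hne)
      refine ⟨i + 1, ?_, ?_⟩
      · rw [Finset.mem_powerset]
        intro y hy
        obtain ⟨j, hj⟩ := hs hy
        have hji : j ≤ i := by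
          have : aSeq C p0 j ≤ aSeq C p0 i := by
            rw [hi, hj]; exact s.le_max' y hy
          exact (aSeq_strictMono C p0).le_iff_le.mp this
        rw [← hj]
        exact aSeq_mem_F C p0 (i+1) j (Nat.lt_succ_of_le hji)
      · rintro x ⟨⟨m, rfl⟩, hab⟩
        have : aSeq C p0 i < aSeq C p0 m := by
          rw [hi]; exact hab _ (s.max'_mem hne)
        have him : i < m := (aSeq_strictMono C p0).lt_iff_lt.mp this
        exact chain1_anti C p0 him (aSeq_mem C p0 m)
  obtain ⟨n, hsF, htail⟩ := key
  exact ((chain1 C p0 n).2.2.2 s hsF).imp (accepts_mono htail) (rejects_mono htail)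

/-! ### Phase 2: diagonalizing inside a rejecting set -/

lemma insert_union_diff (a : ℕ) (s : Finset ℕ) (B : Set ℕ) (ha : a ∈ B) :
    (↑(insert a s) : Set ℕ) ∪ (B \ {a}) = ↑s ∪ B := by
  ext x
  by_cases hx : x = a <;> simp [hx, ha]

lemma bad_finite (C : Set InfSubsets) (X0 : Set ℕ) (hdec : Dec C X0)
    (s : Finset ℕ) (hs : ↑s ⊆ X0) (hR : R C X0 s) :
    {a ∈ X0 | above s a ∧ ¬ R C X0 (insert a s)}.Finite := by
  by_contra h
  replace h : {a ∈ X0 | above s a ∧ ¬ R C X0 (insert a s)}.Infinite := h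
  set Bad := {a ∈ X0 | above s a ∧ ¬ R C X0 (insert a s)} with hBad
  have hsubtail : Bad ⊆ tail X0 s := fun a ha => ⟨ha.1, ha.2.1⟩
  refine hR Bad h hsubtail ?_
  intro B' hB'inf hB'sub hB'ab
  obtain ⟨a, haB'⟩ := hB'inf.nonempty
  have haB'' : sInf B' ∈ B' := Nat.sInf_mem ⟨a, haB'⟩
  set b := sInf B' with hb
  have hbBad : b ∈ Bad := hB'sub haB''
  have hins : (↑(insert b s) : Set ℕ) ⊆ X0 := by
    rw [Finset.coe_insert]
    exact Set.insert_subset hbBad.1 hs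
  have hacc : accepts C (insert b s) (tail X0 (insert b s)) :=
    (hdec (insert b s) hins).resolve_right hbBad.2.2
  have hB''inf : (B' \ {b}).Infinite := hB'inf.diff (Set.finite_singleton b)
  have habove : ∀ x ∈ B' \ {b}, above (insert b s) x := by
    rintro x ⟨hxB', hxb⟩ y hy
    rcases Finset.mem_insert.mp hy with rfl | hy
    · have hle : b ≤ x := Nat.sInf_le hxB'
      exact lt_of_le_of_ne hle (fun h => hxb (by simp [h.symm]))
    · exact hB'ab x hxB' y hy
  have hsubt : B' \ {b} ⊆ tail X0 (insert b s) := by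
    rintro x hx
    exact ⟨(hB'sub hx.1).1, habove x hx⟩
  have := hacc (B' \ {b}) hB''inf hsubt habove
  rwa [insert_union_diff b s B' haB''] at this

def St2 (C : Set InfSubsets) (X0 : Set ℕ) : Type :=
  {p : Finset ℕ × Set ℕ // p.2 ⊆ X0 ∧ p.2.Infinite ∧
    (∀ x ∈ p.1, ∀ y ∈ p.2, x < y) ∧
    ∀ s ∈ p.1.powerset, ↑s ⊆ X0 ∧ R C X0 s}

lemma step2 (C : Set InfSubsets) (X0 : Set ℕ) (hdec : Dec C X0)
    (p : St2 C X0) :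
    ∃ q : St2 C X0, ∃ a, a ∈ p.1.2 ∧ q.1.1 = insert a p.1.1 ∧
      ∀ y ∈ q.1.2, y ∈ p.1.2 ∧ a < y := by
  obtain ⟨⟨F, A⟩, hAX, hAinf, horder, hinv⟩ := p
  have hBadU : (⋃ s ∈ F.powerset, {a ∈ X0 | above s a ∧ ¬ R C X0 (insert a s)}).Finite := by
    apply Set.Finite.biUnion (F.powerset.finite_toSet)
    intro s hs
    exact bad_finite C X0 hdec s (hinv s hs).1 (hinv s hs).2
  have hG : (A \ ⋃ s ∈ F.powerset, {a ∈ X0 | above s a ∧ ¬ R C X0 (insert a s)}).Infinite :=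
    hAinf.diff hBadU
  set a := sInf (A \ ⋃ s ∈ F.powerset, {a ∈ X0 | above s a ∧ ¬ R C X0 (insert a s)}) with ha_def
  have haG : a ∈ A \ ⋃ s ∈ F.powerset, {a ∈ X0 | above s a ∧ ¬ R C X0 (insert a s)} :=
    Nat.sInf_mem hG.nonempty
  have haA : a ∈ A := haG.1
  have haX0 : a ∈ X0 := hAX haA
  have hnotbad : ∀ s ∈ F.powerset, ¬ (a ∈ X0 ∧ above s a ∧ ¬ R C X0 (insert a s)) := by
    intro s hs hcon
    exact haG.2 (Set.mem_biUnion hs hcon)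
  set A' := A \ Set.Iic a with hA'
  have hA'inf : A'.Infinite := hAinf.diff (Set.finite_Iic a)
  have hA'gt : ∀ y ∈ A', y ∈ A ∧ a < y := by
    intro y hy
    exact ⟨hy.1, by simpa [Set.mem_Iic, not_le] using hy.2⟩
  refine ⟨⟨(insert a F, A'), (Set.diff_subset).trans hAX, hA'inf, ?_, ?_⟩, a, haA, rfl, hA'gt⟩
  · intro x hx y hy
    rcases Finset.mem_insert.mp hx with rfl | hx
    · exact (hA'gt y hy).2
    · exact horder x hx y (hA'gt y hy).1
  · intro s hs
    rw [Finset.mem_powerset] at hs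
    by_cases haIn : a ∈ s
    · have ht : s.erase a ⊆ F := by
        intro x hx
        rcases Finset.mem_insert.mp (hs (Finset.mem_of_mem_erase hx)) with rfl | h
        · exact absurd rfl (Finset.ne_of_mem_erase hx)
        · exact h
      have htP : s.erase a ∈ F.powerset := Finset.mem_powerset.mpr ht
      have habv : above (s.erase a) a := by
        intro y hy
        exact horder y (ht hy) a haA
      have hRins : R C X0 (insert a (s.erase a)) := by
        by_contra hcon
        exact hnotbad _ htP ⟨haX0, habv, hcon⟩
      rw [Finset.insert_erase haIn] at hRins
      refine ⟨?_, hRins⟩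
      intro x hx
      rcases Finset.mem_insert.mp (hs hx) with rfl | h
      · exact haX0
      · exact (hinv F (Finset.mem_powerset.mpr subset_rfl)).1 h
    · have : s ⊆ F := fun x hx => (Finset.mem_insert.mp (hs hx)).resolve_left
        (fun h => haIn (h ▸ hx))
      exact hinv s (Finset.mem_powerset.mpr this)

noncomputable def chain2 (C : Set InfSubsets) (X0 : Set ℕ) (hdec : Dec C X0)
    (p0 : St2 C X0) : ℕ → St2 C X0
  | 0 => p0
  | n + 1 => (step2 C X0 hdec (chain2 C X0 hdec p0 n)).choose

lemma chain2_succ (C : Set InfSubsets) (X0 : Set ℕ) (hdec : Dec C X0)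
    (p0 : St2 C X0) (n : ℕ) :
    chain2 C X0 hdec p0 (n + 1) = (step2 C X0 hdec (chain2 C X0 hdec p0 n)).choose := rfl

noncomputable def bSeq (C : Set InfSubsets) (X0 : Set ℕ) (hdec : Dec C X0)
    (p0 : St2 C X0) (n : ℕ) : ℕ :=
  (step2 C X0 hdec (chain2 C X0 hdec p0 n)).choose_spec.choose

lemma chain2_spec (C : Set InfSubsets) (X0 : Set ℕ) (hdec : Dec C X0)
    (p0 : St2 C X0) (n : ℕ) :
    bSeq C X0 hdec p0 n ∈ (chain2 C X0 hdec p0 n).1.2 ∧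
    (chain2 C X0 hdec p0 (n+1)).1.1 = insert (bSeq C X0 hdec p0 n) (chain2 C X0 hdec p0 n).1.1 ∧
    ∀ y ∈ (chain2 C X0 hdec p0 (n+1)).1.2,
      y ∈ (chain2 C X0 hdec p0 n).1.2 ∧ bSeq C X0 hdec p0 n < y := by
  rw [chain2_succ]
  exact (step2 C X0 hdec (chain2 C X0 hdec p0 n)).choose_spec.choose_spec

lemma phase2 (C : Set InfSubsets) (X0 : Set ℕ) (hX0 : X0.Infinite)
    (hdec : Dec C X0) (hre : R C X0 ∅) :
    ∃ X : Set ℕ, X.Infinite ∧ ∀ s : Finset ℕ, ↑s ⊆ X → R C X0 s := by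
  have hp0 : ∃ p : St2 C X0, p.1.1 = ∅ := by
    refine ⟨⟨(∅, X0), subset_rfl, hX0, by simp, ?_⟩, rfl⟩
    intro s hs
    rw [Finset.mem_powerset, Finset.subset_empty] at hs
    subst hs
    exact ⟨by simp, hre⟩
  obtain ⟨p0, hp0F⟩ := hp0
  set b := bSeq C X0 hdec p0 with hb
  have hbmono : StrictMono b := by
    apply strictMono_nat_of_lt_succ
    intro n
    exact ((chain2_spec C X0 hdec p0 n).2.2 _ (chain2_spec C X0 hdec p0 (n+1)).1).2
  have hFmono : ∀ {n m : ℕ}, n ≤ m →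
      (chain2 C X0 hdec p0 n).1.1 ⊆ (chain2 C X0 hdec p0 m).1.1 := by
    intro n m h
    induction m, h using Nat.le_induction with
    | base => exact subset_rfl
    | succ m hm ih =>
      refine ih.trans ?_
      rw [(chain2_spec C X0 hdec p0 m).2.1]
      exact Finset.subset_insert _ _
  have hbF : ∀ i n, i < n → b i ∈ (chain2 C X0 hdec p0 n).1.1 := by
    intro i n hi
    apply hFmono hi
    rw [(chain2_spec C X0 hdec p0 i).2.1]
    exact Finset.mem_insert_self _ _
  refine ⟨Set.range b, Set.infinite_range_of_injective hbmono.injective, ?_⟩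
  intro s hs
  have key : ∃ n, s ⊆ (chain2 C X0 hdec p0 n).1.1 := by
    classical
    induction s using Finset.induction_on with
    | empty => exact ⟨0, by simp⟩
    | @insert x s hx ih =>
      have hs' : (↑s : Set ℕ) ⊆ Set.range b := by
        refine Set.Subset.trans ?_ hs
        simp
      obtain ⟨n, hn⟩ := ih hs'
      obtain ⟨i, hi⟩ := hs (by simp : x ∈ (↑(insert x s) : Set ℕ))
      refine ⟨max n (i + 1), Finset.insert_subset ?_ (hn.trans (hFmono (le_max_left _ _)))⟩
      rw [← hi]
      exact hFmono (le_max_right n (i+1)) (hbF i (i+1) (Nat.lt_succ_self i))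
  obtain ⟨n, hn⟩ := key
  exact ((chain2 C X0 hdec p0 n).2.2.2.2 s (Finset.mem_powerset.mpr hn)).2

lemma open_nbhd {C : Set InfSubsets} (hC : IsOpen C) {B : InfSubsets} (hB : B ∈ C) :
    ∃ n : ℕ, ∀ B' : InfSubsets, (∀ i < n, B'.1 i = B.1 i) → B' ∈ C := by
  obtain ⟨U, hU, hUC⟩ := isOpen_induced_iff.mp hC
  have hBU : B.1 ∈ U := by rw [← hUC] at hB; exact hB
  obtain ⟨I, u, h1, h2⟩ := isOpen_pi_iff.mp hU B.1 hBU
  refine ⟨I.sup id + 1, ?_⟩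
  intro B' hB'
  have hmem : B'.1 ∈ (↑I : Set ℕ).pi u := by
    intro i hi
    rw [hB' i (Nat.lt_succ_of_le (Finset.le_sup (f := id) (Finset.mem_coe.mp hi)))]
    exact (h1 i (Finset.mem_coe.mp hi)).2
  rw [← hUC]
  exact h2 hmem

end NW

/-- The Nash-Williams theorem: for every clopen subset `𝒞` of `[ℕ]^ω` there is
an infinite `X ⊆ ℕ` such that every infinite subset of `X` lies in `𝒞`, or no
infinite subset of `X` lies in `𝒞`. -/
theorem nash_williams_clopen (C : Set InfSubsets) (hC : IsClopen C) :
    ∃ X : Set ℕ, X.Infinite ∧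
      ((∀ B : InfSubsets, {n : ℕ | B.1 n = true} ⊆ X → B ∈ C) ∨
       (∀ B : InfSubsets, {n : ℕ | B.1 n = true} ⊆ X → B ∉ C)) := by
  classical
  obtain ⟨X0, hX0, hdec⟩ := NW.phase1 C
  rcases hdec ∅ (by simp) with hacc | hrej
  · refine ⟨X0, hX0, Or.inl ?_⟩
    intro B hB
    have hBX : NW.memSet B ⊆ NW.tail X0 ∅ := by
      intro x hx
      exact ⟨hB hx, by intro y hy; simp at hy⟩
    have hIn := hacc (NW.memSet B) B.2 hBX (by intro b _ y hy; simp at hy)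
    simp only [Finset.coe_empty, Set.empty_union] at hIn
    obtain ⟨B', hB', hB'C⟩ := hIn
    exact NW.eq_of_memSet hB' ▸ hB'C
  · have hre : NW.R C X0 ∅ := hrej
    obtain ⟨X, hXinf, hXR⟩ := NW.phase2 C X0 hX0 hdec hre
    refine ⟨X, hXinf, Or.inr ?_⟩
    intro B hB hBC
    obtain ⟨n, hn⟩ := NW.open_nbhd hC.isOpen hBC
    have hfin : (NW.memSet B ∩ Set.Iio n).Finite :=
      Set.Finite.inter_of_right (Set.finite_Iio n) _
    set s := hfin.toFinset with hs_def
    have hsX : (↑s : Set ℕ) ⊆ X := by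
      rw [hs_def, Set.Finite.coe_toFinset]
      exact Set.Subset.trans Set.inter_subset_left hB
    have hRs : NW.rejects C s (NW.tail X0 s) := hXR s hsX
    set m := max n (s.sup id + 1) with hm
    have hAd : (X0 \ Set.Iio m).Infinite := hX0.diff (Set.finite_Iio m)
    have hsubt : (X0 \ Set.Iio m) ⊆ NW.tail X0 s := by
      rintro x ⟨hx1, hx2⟩
      refine ⟨hx1, ?_⟩
      intro y hy
      have h1 : y ≤ s.sup id := Finset.le_sup (f := id) hy
      have h2 : m ≤ x := not_lt.mp hx2
      omega
    refine hRs (X0 \ Set.Iio m) hAd hsubt ?_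
    intro B'' hB''inf hB''sub hB''ab
    have hUinf : ((↑s : Set ℕ) ∪ B'').Infinite := hB''inf.mono Set.subset_union_right
    refine ⟨NW.ofSet _ hUinf, NW.memSet_ofSet _ _, hn _ ?_⟩
    intro i hi
    show NW.chi (↑s ∪ B'') i = B.1 i
    have hB''ge : ∀ x ∈ B'', n ≤ x := by
      intro x hx
      have hx2 := (hB''sub hx).2
      simp only [Set.mem_Iio, not_lt] at hx2
      omega
    by_cases hmem : i ∈ ((↑s : Set ℕ) ∪ B'')
    · have hchi : NW.chi (↑s ∪ B'') i = true := (NW.chi_eq _ _).mpr hmem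
      rcases hmem with hs' | hb'
      · have hiB : i ∈ NW.memSet B ∩ Set.Iio n := by
          rwa [hs_def, Finset.mem_coe, Set.Finite.mem_toFinset] at hs'
        rw [hchi]
        exact (hiB.1 : B.1 i = true).symm
      · exact absurd (hB''ge i hb') (by omega)
    · have hchi : NW.chi (↑s ∪ B'') i = false := by
        cases h : NW.chi (↑s ∪ B'') i
        · rfl
        · exact absurd ((NW.chi_eq _ _).mp h) hmem
      have hBfalse : B.1 i = false := by
        cases h : B.1 i
        · rfl
        · exfalso
          apply hmem
          left
          rw [hs_def, Finset.mem_coe, Set.Finite.mem_toFinset]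
          exact ⟨h, hi⟩
      rw [hchi, hBfalse]
end

section
/- Every Borel subset of [ℕ]^ω (with the topology inherited from 2^ℕ) is Ramsey: for every finite set s ⊆ ℕ and infinite set A ⊆ ℕ with max(s) < min(A \ s) making [s,A] nonempty, there exists B ∈ [s,A] such that either [s,B] ⊆ 𝒳 or [s,B] ∩ 𝒳 = ∅. -/
open Classical in
/-- The characteristic-function embedding of `Set ℕ` into Cantor space `2^ℕ`. -/
noncomputable def charFun (A : Set ℕ) : ℕ → Bool := fun n => decide (n ∈ A)

/-- The topology on `Set ℕ` inherited from the product topology on `2^ℕ`. -/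
noncomputable def cantorTopology : TopologicalSpace (Set ℕ) :=
  TopologicalSpace.induced charFun inferInstance

/-- `[s,A] = {B ∈ [ℕ]^ω : s ⊏ B ⊆ A}`: the infinite `B ⊆ A` having the finite
set `s` as an initial segment (in increasing enumeration). -/
def EllSet (s : Finset ℕ) (A : Set ℕ) : Set (Set ℕ) :=
  {B | B.Infinite ∧ ↑s ⊆ B ∧ B ⊆ A ∧ ∀ x ∈ s, ∀ y ∈ B, y ∉ s → x < y}

/-!
Ellentuck's combinatorial forcing. `E` accepts `t` if every infinite `C` with `t ⊆ C ⊆ t ∪ E`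
lies in `𝒳`, and rejects `t` if no infinite subset of `E` accepts it. A fusion (diagonal)
argument yields an infinite `B ⊆ A` such that every finite `u ⊆ B` is decided by the part of `B`
above `u`. By Galvin's observation a rejected `t` has only finitely many accepted one-point
extensions, so for `𝒳` open in the Ellentuck topology either `s` is accepted or every `s ∪ u` is
rejected, and then `[s, B]` misses `𝒳`. A second fusion shows that a countable union of Ramsey
sets agrees on some `[s, B]` with an Ellentuck-open set; so the Ramsey sets form a σ-algebra,
and it contains the Cantor-open sets.
-/

open Set

namespace GalvinPrikry

/-- The paper's `[t, E]` when `E` lies above `t`. -/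
def nbhd (t : Finset ℕ) (E : Set ℕ) : Set (Set ℕ) :=
  {C | C.Infinite ∧ ↑t ⊆ C ∧ C ⊆ ↑t ∪ E}

def above (t : Finset ℕ) (E : Set ℕ) : Set ℕ :=
  {y ∈ E | ∀ x ∈ t, x < y}

/-- Density in the forcing order of infinite subsets of `ℕ` under inclusion. -/
def IsDense (P : Set ℕ → Prop) : Prop :=
  ∀ E : Set ℕ, E.Infinite → ∃ E' ⊆ E, E'.Infinite ∧ P E'

section Basic

variable {t t' : Finset ℕ} {E E' : Set ℕ}

theorem nbhd_mono (h : E ⊆ E') : nbhd t E ⊆ nbhd t E' :=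
  fun _ ⟨hC, htC, hCE⟩ => ⟨hC, htC, hCE.trans (union_subset_union_right _ h)⟩

theorem above_anti (h : t ⊆ t') : above t' E ⊆ above t E :=
  fun _ ⟨hyE, hy⟩ => ⟨hyE, fun x hx => hy x (h hx)⟩

@[simp]
theorem above_empty : above ∅ E = E := by
  simp [above]

theorem above_insert (a : ℕ) : above (insert a t) E = above t E ∩ Ioi a := by
  ext y
  simp only [above, mem_sep_iff, Finset.forall_mem_insert, mem_inter_iff, mem_Ioi]
  tauto

theorem infinite_above (hE : E.Infinite) : (above t E).Infinite :=
  (hE.sdiff (finite_Iic (t.sup id))).mono fun _ hy =>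
    ⟨hy.1, fun _ hx => (Finset.le_sup (f := id) hx).trans_lt (not_le.1 hy.2)⟩

theorem above_singleton (a : ℕ) : above {a} E = E ∩ Ioi a := by
  rw [← insert_empty_eq, above_insert, above_empty]

end Basic

theorem isDense_forall_mem {ι : Type*} (T : Finset ι) {P : ι → Set ℕ → Prop}
    (hanti : ∀ i, Antitone (P i)) (hP : ∀ i, IsDense (P i)) :
    IsDense fun E => ∀ i ∈ T, P i E := by
  classical
  induction T using Finset.induction_on with
  | empty => exact fun E hE => ⟨E, subset_rfl, hE, by simp⟩
  | insert a T _ ih =>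
    intro E hE
    obtain ⟨E₁, hE₁E, hE₁, hT⟩ := ih E hE
    obtain ⟨E₂, hE₂E₁, hE₂, ha⟩ := hP a E₁ hE₁
    refine ⟨E₂, hE₂E₁.trans hE₁E, hE₂, ?_⟩
    simp only [Finset.forall_mem_insert]
    exact ⟨ha, fun i hi => hanti i hE₂E₁ (hT i hi)⟩

theorem exists_fusion {Q : Finset ℕ → Set ℕ → Prop} (hanti : ∀ u, Antitone (Q u))
    (hdense : ∀ u, IsDense (Q u)) {A : Set ℕ} (hA : A.Infinite) :
    ∃ B ⊆ A, B.Infinite ∧ ∀ u : Finset ℕ, ↑u ⊆ B → Q u (above u B) := by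
  have step : ∀ E : {E : Set ℕ // E.Infinite}, ∃ E' : {E : Set ℕ // E.Infinite},
      E'.1 ⊆ E.1 ∩ Ioi (sInf E.1) ∧ ∀ u ⊆ Finset.Iic (sInf E.1), Q u E'.1 := by
    rintro ⟨E, hE⟩
    have hE' : (above {sInf E} E).Infinite := infinite_above hE
    rw [above_singleton] at hE'
    obtain ⟨E', hE'E, hE', hQ⟩ :=
      isDense_forall_mem (Finset.Iic (sInf E)).powerset hanti hdense _ hE'
    exact ⟨⟨E', hE'⟩, hE'E, fun u hu => hQ u (Finset.mem_powerset.2 hu)⟩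
  -- `F (k + 1)` lies in `F k` above its least element and satisfies `Q u` for every `u` up to
  -- that element; `B` is the set of least elements `c k` of the `F (k + 1)`.
  choose next hnext using step
  let F : ℕ → {E : Set ℕ // E.Infinite} := fun k => Nat.rec ⟨A, hA⟩ (fun _ => next) k
  let c : ℕ → ℕ := fun k => sInf (F (k + 1)).1
  have hF_succ (k) : (F (k + 1)).1 ⊆ (F k).1 ∩ Ioi (sInf (F k).1) := (hnext (F k)).1
  have hQ (k) : ∀ u ⊆ Finset.Iic (sInf (F k).1), Q u (F (k + 1)).1 := (hnext (F k)).2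
  have hF_anti : Antitone fun k => (F k).1 :=
    antitone_nat_of_succ_le fun k => (hF_succ k).trans inter_subset_left
  have hc_mem (k) : c k ∈ (F (k + 1)).1 := Nat.sInf_mem (F (k + 1)).2.nonempty
  have hc_mono : StrictMono c :=
    strictMono_nat_of_lt_succ fun k => (hF_succ (k + 1) (hc_mem (k + 1))).2
  have hc_tail {j k} (h : k ≤ j) : c j ∈ (F (k + 1)).1 :=
    hF_anti (show k + 1 ≤ j + 1 by omega) (hc_mem j)
  refine ⟨range c, range_subset_iff.2 fun k => hF_anti (Nat.zero_le (k + 1)) (hc_mem k),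
    infinite_range_of_injective hc_mono.injective, fun u hu => ?_⟩
  rcases u.eq_empty_or_nonempty with rfl | hne
  · rw [above_empty]
    exact hanti ∅ (range_subset_iff.2 fun k => hc_tail (Nat.zero_le k))
      (hQ 0 ∅ (Finset.empty_subset _))
  · obtain ⟨k, hk⟩ := hu (u.max'_mem hne)
    have hu_le : u ⊆ Finset.Iic (c k) := fun x hx =>
      Finset.mem_Iic.2 ((u.le_max' x hx).trans_eq hk.symm)
    refine hanti u ?_ (hQ (k + 1) u hu_le)
    rintro _ ⟨⟨j, rfl⟩, hj⟩
    exact hc_tail (hc_mono.lt_iff_lt.1 (hk ▸ hj _ (u.max'_mem hne)))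

variable (X : Set (Set ℕ))

def Accepts (t : Finset ℕ) (E : Set ℕ) : Prop :=
  nbhd t E ⊆ X

def Rejects (t : Finset ℕ) (E : Set ℕ) : Prop :=
  ∀ E' ⊆ E, E'.Infinite → ¬Accepts X t E'

def AcceptsOrRejectsExtensions (t : Finset ℕ) (E : Set ℕ) : Prop :=
  Accepts X t E ∨ (Rejects X t E ∧ ∀ m ∈ E, Rejects X (insert m t) (E ∩ Ioi m))

def Decides (t : Finset ℕ) (E : Set ℕ) : Prop :=
  nbhd t E ⊆ X ∨ Disjoint (nbhd t E) X

def IsRamsey : Prop :=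
  ∀ s : Finset ℕ, IsDense (Decides X s)

/-- Open in the Ellentuck topology, after intersecting with the infinite sets. -/
def IsEllentuckOpen : Prop :=
  ∀ C ∈ X, C.Infinite → ∃ (t : Finset ℕ) (E : Set ℕ), C ∈ nbhd t (above t E) ∧
    Accepts X t (above t E)

variable {X} {t : Finset ℕ} {E : Set ℕ}

theorem antitone_accepts : Antitone (Accepts X t) :=
  fun _ _ h hacc => (nbhd_mono h).trans hacc

theorem antitone_rejects : Antitone (Rejects X t) :=
  fun _ _ h hrej E' hE' => hrej E' (hE'.trans h)

theorem antitone_decides : Antitone (Decides X t) :=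
  fun _ _ h => Or.imp (nbhd_mono h).trans (Disjoint.mono_left (nbhd_mono h))

theorem Rejects.not_accepts (h : Rejects X t E) (hE : E.Infinite) : ¬Accepts X t E :=
  h E subset_rfl hE

theorem isDense_accepts_or_rejects : IsDense fun E => Accepts X t E ∨ Rejects X t E := by
  intro E hE
  by_cases h : ∃ E' ⊆ E, E'.Infinite ∧ Accepts X t E'
  · obtain ⟨E', hE'E, hE', hacc⟩ := h
    exact ⟨E', hE'E, hE', Or.inl hacc⟩
  · exact ⟨E, subset_rfl, hE, Or.inr fun E' hE'E hE' hacc => h ⟨E', hE'E, hE', hacc⟩⟩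

theorem accepts_of_forall_accepts_insert {N : Set ℕ} (hNE : N ⊆ E)
    (h : ∀ m ∈ N, Accepts X (insert m t) (E ∩ Ioi m)) : Accepts X t N := by
  rintro C ⟨hC, htC, hCN⟩
  -- `C` lies in the neighbourhood of `t` extended by its least element beyond `t`.
  have hm : sInf (C \ ↑t) ∈ C \ ↑t := Nat.sInf_mem (hC.sdiff t.finite_toSet).nonempty
  refine h _ ((hCN hm.1).resolve_left hm.2) ⟨hC, ?_, fun y hy => ?_⟩
  · rw [Finset.coe_insert]
    exact insert_subset hm.1 htC
  rw [Finset.coe_insert, insert_union]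
  by_cases hyt : y ∈ (t : Set ℕ)
  · exact mem_insert_of_mem _ (Or.inl hyt)
  rcases (Nat.sInf_le ⟨hy, hyt⟩ : sInf (C \ ↑t) ≤ y).eq_or_lt with rfl | hlt
  · exact mem_insert _ _
  · exact mem_insert_of_mem _ (Or.inr ⟨hNE ((hCN hy).resolve_left hyt), hlt⟩)

theorem Rejects.exists_rejects_insert (hrej : Rejects X t E) (hE : E.Infinite) :
    ∃ E' ⊆ E, E'.Infinite ∧ ∀ m ∈ E', Rejects X (insert m t) (E' ∩ Ioi m) := by
  obtain ⟨B, hBE, hB, hdec⟩ :=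
    exists_fusion (Q := fun u E => Accepts X (u ∪ t) E ∨ Rejects X (u ∪ t) E)
      (fun _ _ _ h => Or.imp (antitone_accepts h) (antitone_rejects h))
      (fun _ => isDense_accepts_or_rejects) hE
  have hdec_insert (m) (hm : m ∈ B) :
      Accepts X (insert m t) (B ∩ Ioi m) ∨ Rejects X (insert m t) (B ∩ Ioi m) := by
    simpa [← Finset.insert_eq, above_singleton] using hdec {m} (by simpa using hm)
  let N := {m ∈ B | Accepts X (insert m t) (B ∩ Ioi m)}
  have hN : N.Finite := by
    by_contra hN
    exact hrej N ((sep_subset _ _).trans hBE) hN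
      (accepts_of_forall_accepts_insert (sep_subset _ _) fun m hm => hm.2)
  refine ⟨B \ N, sdiff_subset.trans hBE, hB.sdiff hN, fun m hm => ?_⟩
  exact antitone_rejects (inter_subset_inter_left _ sdiff_subset)
    ((hdec_insert m hm.1).resolve_left fun hacc => hm.2 ⟨hm.1, hacc⟩)

theorem antitone_acceptsOrRejectsExtensions : Antitone (AcceptsOrRejectsExtensions X t) :=
  fun _ _ h => Or.imp (antitone_accepts h) <| And.imp (antitone_rejects h) fun hext m hm =>
    antitone_rejects (inter_subset_inter_left _ h) (hext m (h hm))

theorem isDense_acceptsOrRejectsExtensions : IsDense (AcceptsOrRejectsExtensions X t) := by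
  intro E hE
  obtain ⟨E₁, hE₁E, hE₁, hacc | hrej⟩ :=
    isDense_accepts_or_rejects (X := X) (t := t) E hE
  · exact ⟨E₁, hE₁E, hE₁, Or.inl hacc⟩
  · obtain ⟨E₂, hE₂E₁, hE₂, hext⟩ := hrej.exists_rejects_insert hE₁
    exact ⟨E₂, hE₂E₁.trans hE₁E, hE₂, Or.inr ⟨antitone_rejects hE₂E₁ hrej, hext⟩⟩

theorem rejects_union_above {s : Finset ℕ} {B : Set ℕ} (hB : B.Infinite)
    (hQ : ∀ u : Finset ℕ, ↑u ⊆ B → AcceptsOrRejectsExtensions X (s ∪ u) (above u B))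
    (hrej : Rejects X s B) (u : Finset ℕ) (hu : ↑u ⊆ B) :
    Rejects X (s ∪ u) (above u B) := by
  induction u using Finset.induction_on_max with
  | empty => simpa using hrej
  | insert a u hlt ih =>
    have hu' : ↑u ⊆ B := (Finset.coe_subset.2 (Finset.subset_insert a u)).trans hu
    obtain hacc | ⟨-, hext⟩ := hQ u hu'
    · exact absurd hacc ((ih hu').not_accepts (infinite_above hB))
    · rw [Finset.union_insert, above_insert]
      exact hext a ⟨hu (by simp), hlt⟩

theorem IsEllentuckOpen.disjoint_nbhd (hX : IsEllentuckOpen X) {s : Finset ℕ} {B : Set ℕ}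
    (hrej : ∀ u : Finset ℕ, ↑u ⊆ B → Rejects X (s ∪ u) (above u B)) :
    Disjoint (nbhd s B) X := by
  refine disjoint_left.2 fun C ⟨hC, hsC, hCB⟩ hCX => ?_
  obtain ⟨u, E, ⟨-, huC, hCu⟩, huX⟩ := hX C hCX hC
  have hu : ↑(u \ s) ⊆ B := fun x hx => by
    rw [Finset.coe_sdiff] at hx
    exact (hCB (huC hx.1)).resolve_left hx.2
  have hrej_u := hrej (u \ s) hu
  rw [Finset.union_sdiff_self_eq_union] at hrej_u
  refine hrej_u (above (s ∪ u) C) (fun y ⟨hyC, hy⟩ => ⟨?_, fun x hx => hy x ?_⟩)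
    (infinite_above hC) fun D ⟨hD, hsuD, hDsu⟩ => huX ⟨hD, ?_, ?_⟩
  · exact (hCB hyC).resolve_left fun hys => (hy y (Finset.mem_union_left _ hys)).false
  · exact Finset.mem_union_right _ (Finset.sdiff_subset hx)
  · exact (Finset.coe_subset.2 Finset.subset_union_right).trans hsuD
  · have hsuC : ↑(s ∪ u) ⊆ C := by
      rw [Finset.coe_union]
      exact union_subset hsC huC
    exact hDsu.trans (union_subset hsuC (sep_subset _ _)) |>.trans hCu

theorem IsEllentuckOpen.isRamsey (hX : IsEllentuckOpen X) : IsRamsey X := by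
  intro s A hA
  obtain ⟨B, hBA, hB, hQ⟩ :=
    exists_fusion (Q := fun u => AcceptsOrRejectsExtensions X (s ∪ u))
      (fun _ => antitone_acceptsOrRejectsExtensions)
      (fun _ => isDense_acceptsOrRejectsExtensions) hA
  refine ⟨B, hBA, hB, ?_⟩
  obtain hacc | ⟨hrej, -⟩ : AcceptsOrRejectsExtensions X s B := by simpa using hQ ∅ (by simp)
  · exact Or.inl hacc
  · exact Or.inr (hX.disjoint_nbhd (rejects_union_above hB hQ hrej))

theorem isRamsey_empty : IsRamsey ∅ :=
  fun _ E hE => ⟨E, subset_rfl, hE, Or.inr (disjoint_empty _)⟩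

theorem IsRamsey.compl (hX : IsRamsey X) : IsRamsey Xᶜ := by
  intro s E hE
  obtain ⟨E', hE'E, hE', hdec⟩ := hX s E hE
  refine ⟨E', hE'E, hE', hdec.symm.imp ?_ ?_⟩
  · exact subset_compl_iff_disjoint_right.2
  · exact disjoint_compl_right_iff_subset.2

theorem exists_nbhd_above_subset {X : ℕ → Set (Set ℕ)} {s : Finset ℕ} {B : Set ℕ}
    (hdec : ∀ u : Finset ℕ, ↑u ⊆ B →
      ∀ i ∈ Finset.Iic (u.sup id), Decides (X i) (s ∪ u) (above u B))
    {C : Set ℕ} (hC : C ∈ nbhd s B) {i : ℕ} (hCi : C ∈ X i) :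
    ∃ t : Finset ℕ, C ∈ nbhd t (above t B) ∧ nbhd t (above t B) ⊆ X i := by
  classical
  obtain ⟨hC, hsC, hCB⟩ := hC
  obtain ⟨m, hmC, hm⟩ := hC.exists_gt (i + s.sup id)
  have hs_lt (x) (hx : x ∈ s) : x < m := (Finset.le_sup (f := id) hx).trans_lt (by omega)
  let u := (Finset.Iic m).filter (· ∈ C \ ↑s)
  have hmu : m ∈ u :=
    Finset.mem_filter.2 ⟨Finset.mem_Iic.2 le_rfl, hmC, fun h => (hs_lt m h).false⟩
  have hu : ↑u ⊆ B := fun x hx => by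
    obtain ⟨-, hxC, hxs⟩ := Finset.mem_filter.1 hx
    exact (hCB hxC).resolve_left hxs
  have hCu : C ∈ nbhd (s ∪ u) (above (s ∪ u) B) := by
    refine ⟨hC, ?_, fun y hyC => ?_⟩
    · rw [Finset.coe_union]
      exact union_subset hsC fun x hx => (Finset.mem_filter.1 hx).2.1
    by_cases hys : y ∈ s
    · exact Or.inl (Finset.mem_union_left _ hys)
    by_cases hym : y ≤ m
    · exact Or.inl <| Finset.mem_union_right _ <|
        Finset.mem_filter.2 ⟨Finset.mem_Iic.2 hym, hyC, hys⟩
    refine Or.inr ⟨(hCB hyC).resolve_left hys, fun x hx => ?_⟩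
    rcases Finset.mem_union.1 hx with hx | hx
    · exact (hs_lt x hx).trans (not_le.1 hym)
    · exact (Finset.mem_Iic.1 (Finset.mem_filter.1 hx).1).trans_lt (not_le.1 hym)
  have hdec_i : Decides (X i) (s ∪ u) (above (s ∪ u) B) :=
    antitone_decides (above_anti Finset.subset_union_right) <| hdec u hu i <|
      Finset.mem_Iic.2 ((by omega : i ≤ m).trans (Finset.le_sup (f := id) hmu))
  exact ⟨s ∪ u, hCu, hdec_i.resolve_right fun hdisj => disjoint_left.1 hdisj hCu hCi⟩

theorem IsRamsey.iUnion {X : ℕ → Set (Set ℕ)} (hX : ∀ i, IsRamsey (X i)) :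
    IsRamsey (⋃ i, X i) := by
  intro s A hA
  obtain ⟨B, hBA, hB, hdec⟩ :=
    exists_fusion (Q := fun u E => ∀ i ∈ Finset.Iic (u.sup id), Decides (X i) (s ∪ u) E)
      (fun _ _ _ h hQ i hi => antitone_decides h (hQ i hi))
      (fun u => isDense_forall_mem _ (fun _ => antitone_decides) fun i => hX i (s ∪ u)) hA
  let Y : Set (Set ℕ) :=
    {C | ∃ (t : Finset ℕ) (i : ℕ), C ∈ nbhd t (above t B) ∧ nbhd t (above t B) ⊆ X i}
  have hY : IsEllentuckOpen Y :=
    fun _ ⟨t, i, hC, hX⟩ _ => ⟨t, B, hC, fun D hD => ⟨t, i, hD, hX⟩⟩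
  have hYX : Y ⊆ ⋃ i, X i := fun C ⟨_, i, hC, hX⟩ => mem_iUnion.2 ⟨i, hX hC⟩
  obtain ⟨B', hB'B, hB', hdecY⟩ := hY.isRamsey s B hB
  refine ⟨B', hB'B.trans hBA, hB', hdecY.imp (·.trans hYX) fun h => ?_⟩
  refine disjoint_left.2 fun C hC hCX => disjoint_left.1 h hC ?_
  obtain ⟨i, hCi⟩ := mem_iUnion.1 hCX
  obtain ⟨t, htC, htX⟩ := exists_nbhd_above_subset hdec (nbhd_mono hB'B hC) hCi
  exact ⟨t, i, htC, htX⟩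

theorem isEllentuckOpen_of_isOpen {U : Set (Set ℕ)}
    (hU : @IsOpen (Set ℕ) cantorTopology U) : IsEllentuckOpen U := by
  classical
  obtain ⟨V, hV, rfl⟩ := isOpen_induced_iff.1 hU
  intro C hCV hC
  obtain ⟨_, ⟨x, n, rfl⟩, hCx, hxV⟩ := (PiNat.isTopologicalBasis_cylinders fun _ => Bool)
    |>.exists_subset_of_mem_open (show charFun C ∈ V from hCV) hV
  rw [PiNat.mem_cylinder_iff_eq] at hCx
  rw [← hCx] at hxV
  let t := (Finset.range n).filter (· ∈ C)
  have hmem_iff : ∀ D ∈ nbhd t (above t (C ∩ Ici n)), ∀ i < n, i ∈ D ↔ i ∈ t := by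
    rintro D ⟨-, htD, hDt⟩ i hi
    refine ⟨fun hiD => ?_, fun hit => htD hit⟩
    exact (hDt hiD).resolve_right fun h => not_le.2 hi h.1.2
  have hCt : C ∈ nbhd t (above t (C ∩ Ici n)) := by
    refine ⟨hC, fun i hi => (Finset.mem_filter.1 hi).2, fun y hy => ?_⟩
    by_cases hyn : y < n
    · exact Or.inl (Finset.mem_filter.2 ⟨Finset.mem_range.2 hyn, hy⟩)
    · refine Or.inr ⟨⟨hy, not_lt.1 hyn⟩, fun i hi => ?_⟩
      exact (Finset.mem_range.1 (Finset.mem_filter.1 hi).1).trans_le (not_lt.1 hyn)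
  refine ⟨t, C ∩ Ici n, hCt, fun D hD => hxV fun i hi => ?_⟩
  simp only [charFun, decide_eq_decide]
  exact (hmem_iff D hD i hi).trans (hmem_iff C hCt i hi).symm

theorem isRamsey_of_measurableSet
    (hX : @MeasurableSet (Set ℕ) (@borel (Set ℕ) cantorTopology) X) : IsRamsey X :=
  let ramsey : MeasurableSpace (Set ℕ) :=
    { MeasurableSet' := IsRamsey
      measurableSet_empty := isRamsey_empty
      measurableSet_compl := fun _ => IsRamsey.compl
      measurableSet_iUnion := fun _ => IsRamsey.iUnion }
  MeasurableSpace.generateFrom_le (m := ramsey)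
    (fun _ hU => (isEllentuckOpen_of_isOpen hU).isRamsey) X hX

end GalvinPrikry

theorem galvin_prikry_general (X : Set (Set ℕ))
    (hX : @MeasurableSet (Set ℕ) (@borel (Set ℕ) cantorTopology) X)
    (s : Finset ℕ) (A : Set ℕ) (hA : A.Infinite) (hsA : ↑s ⊆ A)
    (hlt : ∀ x ∈ s, ∀ y ∈ A, y ∉ s → x < y) :
    ∃ B ∈ EllSet s A, EllSet s B ⊆ X ∨ Disjoint (EllSet s B) X := by
  obtain ⟨B, hBA, hB, hdec⟩ :=
    GalvinPrikry.isRamsey_of_measurableSet hX s (A \ ↑s) (hA.sdiff s.finite_toSet)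
  have hEll : EllSet s (↑s ∪ B) ⊆ GalvinPrikry.nbhd s B :=
    fun C hC => ⟨hC.1, hC.2.1, hC.2.2.1⟩
  refine ⟨↑s ∪ B, ⟨hB.mono subset_union_right, subset_union_left,
    union_subset hsA (hBA.trans sdiff_subset), ?_⟩,
    hdec.imp hEll.trans (Disjoint.mono_left hEll)⟩
  rintro x hx y (hy | hy) hys
  · exact absurd hy hys
  · exact hlt x hx y (hBA hy).1 hys

/-- The Galvin–Prikry theorem: every Borel subset of `[ℕ]^ω` is Ramsey. -/
theorem galvin_prikry (X : Set (Set ℕ))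
    (hX : @MeasurableSet (Set ℕ) (@borel (Set ℕ) cantorTopology) X)
    (hXinf : ∀ B ∈ X, Set.Infinite B)
    (s : Finset ℕ) (A : Set ℕ) (hA : A.Infinite) (hsA : ↑s ⊆ A)
    (hlt : ∀ x ∈ s, ∀ y ∈ A, y ∉ s → x < y) :
    ∃ B ∈ EllSet s A, EllSet s B ⊆ X ∨ Disjoint (EllSet s B) X :=
  galvin_prikry_general X hX s A hA hsA hlt
end

section
/- Assuming the axiom of choice, there exists a coloring c : [ℕ]^ω → 2 of the infinite subsets of ℕ into two colors such that for every infinite set X ⊆ ℕ, both colors are attained by infinite subsets of X; i.e., there is no infinite monochromatic set. -/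
open symmDiff
noncomputable section ErdosRado

/-- Finite symmetric difference equivalence on `Set ℕ`. -/
def erSetoid : Setoid (Set ℕ) where
  r A B := (A ∆ B).Finite
  iseqv := ⟨fun A => by simp,
    fun {A B} h => by rwa [symmDiff_comm],
    fun {A B C} h1 h2 => (h1.union h2).subset (symmDiff_triangle A B C)⟩

/-- A choice of representative for each class. -/
def erRep (Y : Set ℕ) : Set ℕ := (Quotient.mk erSetoid Y).out

lemma erRep_finite (Y : Set ℕ) : (Y ∆ erRep Y).Finite := by
  have h : erSetoid.r (erRep Y) Y := Quotient.exact (Quotient.out_eq _)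
  have := h
  rwa [show erSetoid.r (erRep Y) Y = (erRep Y ∆ Y).Finite from rfl, symmDiff_comm] at this

lemma erRep_diff {Y : Set ℕ} {x : ℕ} (hx : x ∈ Y) : erRep (Y \ {x}) = erRep Y := by
  have h : erSetoid.r (Y \ {x}) Y := by
    show ((Y \ {x}) ∆ Y).Finite
    apply (Set.finite_singleton x).subset
    intro y hy
    rcases Set.mem_symmDiff.mp hy with ⟨h1, h2⟩ | ⟨h1, h2⟩
    · exact absurd h1.1 h2
    · simpa using fun hne => h2 ⟨h1, hne⟩
  unfold erRep
  rw [Quotient.sound h]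

/-- The Erdős–Rado coloring. -/
def erColor (Y : Set ℕ) : Fin 2 := ⟨(Y ∆ erRep Y).ncard % 2, Nat.mod_lt _ two_pos⟩

lemma erColor_flip {Y : Set ℕ} {x : ℕ} (hx : x ∈ Y) :
    erColor (Y \ {x}) ≠ erColor Y := by
  have hrep := erRep_diff hx
  set R := erRep Y with hR
  have hfin : (Y ∆ R).Finite := erRep_finite Y
  by_cases hxR : x ∈ R
  · -- removing x adds x to the symmetric difference
    have hset : (Y \ {x}) ∆ R = insert x (Y ∆ R) := by
      ext y
      by_cases hyx : y = x
      · subst hyx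
        simp [Set.mem_symmDiff, hx, hxR]
      · simp only [Set.mem_symmDiff, Set.mem_diff, Set.mem_insert_iff,
          Set.mem_singleton_iff]
        tauto
    have hxnot : x ∉ Y ∆ R := by
      simp [Set.mem_symmDiff, hx, hxR]
    have hcard : ((Y \ {x}) ∆ R).ncard = (Y ∆ R).ncard + 1 := by
      rw [hset, Set.ncard_insert_of_notMem hxnot hfin]
    intro hc
    have hv := congrArg Fin.val hc
    simp only [erColor, hrep, ← hR, hcard, Fin.val_mk] at hv
    omega
  · -- removing x removes x from the symmetric difference
    have hset : Y ∆ R = insert x ((Y \ {x}) ∆ R) := by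
      ext y
      by_cases hyx : y = x
      · subst hyx
        simp [Set.mem_symmDiff, hx, hxR]
      · simp only [Set.mem_symmDiff, Set.mem_diff, Set.mem_insert_iff,
          Set.mem_singleton_iff]
        tauto
    have hxnot : x ∉ (Y \ {x}) ∆ R := by
      simp [Set.mem_symmDiff, hxR]
    have hfin' : ((Y \ {x}) ∆ R).Finite := by
      apply hfin.subset
      rw [hset]
      exact Set.subset_insert _ _
    have hcard : (Y ∆ R).ncard = ((Y \ {x}) ∆ R).ncard + 1 := by
      rw [hset, Set.ncard_insert_of_notMem hxnot hfin']
    intro hc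
    have hv := congrArg Fin.val hc
    simp only [erColor, hrep, ← hR, hcard, Fin.val_mk] at hv
    omega

end ErdosRado

/-- The Erdős–Rado counterexample (using the axiom of choice): there is a
2-coloring of the infinite subsets of `ℕ` such that every infinite `X ⊆ ℕ`
contains infinite subsets of both colors; no infinite set is monochromatic. -/
theorem erdos_rado_bad_coloring :
    ∃ c : Set ℕ → Fin 2, ∀ X : Set ℕ, X.Infinite →
      (∃ Y : Set ℕ, Y ⊆ X ∧ Y.Infinite ∧ c Y = 0) ∧
      (∃ Y : Set ℕ, Y ⊆ X ∧ Y.Infinite ∧ c Y = 1) := by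
  refine ⟨erColor, fun X hX => ?_⟩
  obtain ⟨x, hx⟩ := hX.nonempty
  have hX' : (X \ {x}).Infinite := hX.diff (Set.finite_singleton x)
  have hflip : erColor (X \ {x}) ≠ erColor X := erColor_flip hx
  have hsub : X \ {x} ⊆ X := Set.diff_subset
  have h2 : ∀ a : Fin 2, a = 0 ∨ a = 1 := by decide
  rcases h2 (erColor X) with h | h
  · refine ⟨⟨X, subset_refl X, hX, h⟩, ⟨X \ {x}, hsub, hX', ?_⟩⟩
    rcases h2 (erColor (X \ {x})) with h' | h'
    · exact absurd (h'.trans h.symm) hflip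
    · exact h'
  · refine ⟨⟨X \ {x}, hsub, hX', ?_⟩, ⟨X, subset_refl X, hX, h⟩⟩
    rcases h2 (erColor (X \ {x})) with h' | h'
    · exact h'
    · exact absurd (h'.trans h.symm) hflip
end

section
/- Let ◁ be the order on 2^{<ω} defined by: s ◁ t iff s <_lex t, or s ⊏ t and t(|s|)=1, or t ⊏ s and s(|t|)=0. Define a coloring c of unordered pairs {s,t} from 2^{<ω} by c({s,t}) = 0 if |s| ≤ |t| and s ◁ t, and c({s,t}) = 1 otherwise. Then for every subset S ⊆ 2^{<ω} such that (S, ◁) is a dense linear order without endpoints, both colors 0 and 1 are attained by pairs from S. -/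
/-- `s` is a proper initial segment of `t`. -/
def ProperPrefix (s t : List Bool) : Prop := s <+: t ∧ s ≠ t

/-- `s <_lex t`: `s` and `t` are incomparable and `s` is lexicographically
below `t`. -/
def LexBelow (s t : List Bool) : Prop :=
  ∃ i : ℕ, i < s.length ∧ i < t.length ∧
    (∀ j : ℕ, j < i → s.getD j false = t.getD j false) ∧
    s.getD i false = false ∧ t.getD i false = true

/-- Sierpiński's order `◁` on `2^{<ω}`. -/
def TriLt (s t : List Bool) : Prop :=
  LexBelow s t ∨ (ProperPrefix s t ∧ t.getD s.length false = true) ∨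
    (ProperPrefix t s ∧ s.getD t.length false = false)

/-- Sierpiński's coloring of the unordered pair `{s,t}`: color `0` iff the
order by length agrees with `◁` on the pair (`c({s,t}) = 0` if `|s| ≤ |t|` and
`s ◁ t`), and `1` otherwise. -/
noncomputable def sierpColor (s t : List Bool) : Fin 2 :=
  open Classical in
  if (s.length ≤ t.length ∧ TriLt s t) ∨ (t.length ≤ s.length ∧ TriLt t s)
    then 0 else 1

/-- Rational valuation: `sval s = 0.s₀s₁…s_{n-1}1` in binary. -/
def sval : List Bool → ℚ
  | [] => 1/2
  | b :: s => (if b then 1 else 0) / 2 + sval s / 2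

lemma sval_mem : ∀ s : List Bool, 0 < sval s ∧ sval s < 1 := by
  intro s
  induction s with
  | nil => norm_num [sval]
  | cons b s ih =>
    rcases b <;> simp only [sval] <;> constructor <;> [skip; skip; skip; skip] <;>
      · rcases ih with ⟨h1, h2⟩; norm_num; linarith

lemma trilt_shift {x y : Bool} {s t : List Bool} (h : TriLt (x :: s) (y :: t)) :
    (x = false ∧ y = true) ∨ (x = y ∧ TriLt s t) := by
  rcases h with ⟨i, hi1, hi2, hagree, h0, h1⟩ | ⟨⟨hpre, hne⟩, hget⟩ | ⟨⟨hpre, hne⟩, hget⟩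
  · cases i with
    | zero =>
      left; simpa using And.intro h0 h1
    | succ j =>
      right
      have hxy : x = y := by simpa using hagree 0 (Nat.succ_pos j)
      refine ⟨hxy, Or.inl ⟨j, ?_, ?_, ?_, ?_, ?_⟩⟩
      · simpa using Nat.lt_of_succ_lt_succ (by simpa using hi1)
      · simpa using Nat.lt_of_succ_lt_succ (by simpa using hi2)
      · intro k hk; simpa using hagree (k + 1) (Nat.succ_lt_succ hk)
      · simpa using h0
      · simpa using h1
  · rw [List.cons_prefix_cons] at hpre
    refine Or.inr ⟨hpre.1, Or.inr (Or.inl ⟨⟨hpre.2, ?_⟩, ?_⟩)⟩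
    · intro hst; exact hne (by rw [hpre.1, hst])
    · simpa using hget
  · rw [List.cons_prefix_cons] at hpre
    refine Or.inr ⟨hpre.1.symm, Or.inr (Or.inr ⟨⟨hpre.2, ?_⟩, ?_⟩)⟩
    · intro hst; exact hne (by rw [hpre.1, hst])
    · simpa using hget

lemma sval_lt : ∀ s t : List Bool, TriLt s t → sval s < sval t := by
  intro s
  induction s with
  | nil =>
    intro t h
    cases t with
    | nil =>
      exfalso
      rcases h with ⟨i, hi1, _⟩ | ⟨⟨_, hne⟩, _⟩ | ⟨⟨_, hne⟩, _⟩
      · simp at hi1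
      · exact hne rfl
      · exact hne rfl
    | cons y t' =>
      rcases h with ⟨i, hi1, _⟩ | ⟨_, hget⟩ | ⟨⟨hpre, hne⟩, _⟩
      · simp at hi1
      · have hy : y = true := by simpa using hget
        have := (sval_mem t').1
        simp only [sval, hy]; norm_num; linarith
      · exact absurd (List.prefix_nil.mp hpre) (by simp)
  | cons x s' ih =>
    intro t h
    cases t with
    | nil =>
      rcases h with ⟨i, _, hi2, _⟩ | ⟨⟨hpre, hne⟩, _⟩ | ⟨_, hget⟩
      · simp at hi2
      · exact absurd (List.prefix_nil.mp hpre) (by simp)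
      · have hx : x = false := by simpa using hget
        have := (sval_mem s').2
        simp only [sval, hx]; norm_num; linarith
    | cons y t' =>
      rcases trilt_shift h with ⟨hx, hy⟩ | ⟨hxy, ht⟩
      · have h1 := (sval_mem s').2
        have h2 := (sval_mem t').1
        simp only [sval, hx, hy]; norm_num; linarith
      · have := ih t' ht
        subst hxy
        rcases x <;> simp only [sval] <;> norm_num <;> linarith

lemma trilt_ne {s t : List Bool} (h : TriLt s t) : s ≠ t :=
  fun he => absurd (sval_lt s t h) (by rw [he]; exact lt_irrefl _)

lemma trilt_asymm {s t : List Bool} (h : TriLt s t) : ¬ TriLt t s :=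
  fun h' => absurd (sval_lt s t h) (not_lt.mpr (le_of_lt (sval_lt t s h')))

/-- For every `S ⊆ 2^{<ω}` such that `(S, ◁)` is a dense linear order without
endpoints, both colors of Sierpiński's coloring are attained by pairs from
`S`. -/
theorem sierpinski_coloring_unavoidable (S : Set (List Bool)) (hne : S.Nonempty)
    (hdense : ∀ s ∈ S, ∀ t ∈ S, TriLt s t → ∃ u ∈ S, TriLt s u ∧ TriLt u t)
    (hnomin : ∀ s ∈ S, ∃ t ∈ S, TriLt t s)
    (hnomax : ∀ s ∈ S, ∃ t ∈ S, TriLt s t) :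
    (∃ s ∈ S, ∃ t ∈ S, s ≠ t ∧ sierpColor s t = 0) ∧
    (∃ s ∈ S, ∃ t ∈ S, s ≠ t ∧ sierpColor s t = 1) := by
  obtain ⟨a, haS⟩ := hne
  obtain ⟨b, hbS, hab⟩ := hnomax a haS
  choose g hg1 hg2 hg3 using hdense
  constructor
  · -- color 0: find u ∈ S with a ◁ u and |a| ≤ |u|
    let u : ℕ → {x // x ∈ S ∧ TriLt a x} := fun n =>
      Nat.rec ⟨b, hbS, hab⟩
        (fun _ p => ⟨g a haS p.1 p.2.1 p.2.2, hg1 _ _ _ _ _, hg2 _ _ _ _ _⟩) n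
    have hu : ∀ n, TriLt (u (n + 1)).1 (u n).1 := fun n => hg3 _ _ _ _ _
    have hanti : StrictAnti (fun n => sval (u n).1) :=
      strictAnti_nat_of_succ_lt (fun n => sval_lt _ _ (hu n))
    have hinj : Function.Injective (fun n => (u n).1) := by
      intro m n h
      exact hanti.injective (congrArg sval h)
    have hinf : {x | x ∈ S ∧ TriLt a x}.Infinite :=
      Set.infinite_of_injective_forall_mem hinj (fun n => (u n).2)
    have hfin : {l : List Bool | l.length < a.length}.Finite :=
      List.finite_length_lt Bool a.length
    obtain ⟨v, ⟨hvS, hav⟩, hvlen⟩ := (hinf.diff hfin).nonempty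
    refine ⟨a, haS, v, hvS, trilt_ne hav, ?_⟩
    simp only [sierpColor]
    rw [if_pos (Or.inl ⟨not_lt.mp hvlen, hav⟩)]
  · -- color 1: find v ∈ S with v ◁ b and |v| > |b|
    let u : ℕ → {x // x ∈ S ∧ TriLt x b} := fun n =>
      Nat.rec ⟨a, haS, hab⟩
        (fun _ p => ⟨g p.1 p.2.1 b hbS p.2.2, hg1 _ _ _ _ _, hg3 _ _ _ _ _⟩) n
    have hu : ∀ n, TriLt (u n).1 (u (n + 1)).1 := fun n => hg2 _ _ _ _ _
    have hmono : StrictMono (fun n => sval (u n).1) :=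
      strictMono_nat_of_lt_succ (fun n => sval_lt _ _ (hu n))
    have hinj : Function.Injective (fun n => (u n).1) := by
      intro m n h
      exact hmono.injective (congrArg sval h)
    have hinf : {x | x ∈ S ∧ TriLt x b}.Infinite :=
      Set.infinite_of_injective_forall_mem hinj (fun n => (u n).2)
    have hfin : {l : List Bool | l.length < b.length + 1}.Finite :=
      List.finite_length_lt Bool (b.length + 1)
    obtain ⟨v, ⟨hvS, hvb⟩, hvlen⟩ := (hinf.diff hfin).nonempty
    have hlen : b.length < v.length := by
      simp only [Set.mem_setOf_eq, not_lt] at hvlen; omega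
    refine ⟨v, hvS, b, hbS, trilt_ne hvb, ?_⟩
    simp only [sierpColor]
    rw [if_neg]
    rintro (⟨hle, _⟩ | ⟨_, hbv⟩)
    · omega
    · exact trilt_asymm hvb hbv
end

section
/- The rationals as a linear order are indivisible: for every partition of ℚ into finitely many pieces, at least one piece contains a subset that is a dense linear order without endpoints (hence order-isomorphic to ℚ). -/
/-- The rationals are indivisible: for every partition of `ℚ` into finitely
many pieces, some piece contains a subset order-isomorphic to `(ℚ, <)`
(a dense linear order without endpoints). -/
theorem rationals_indivisible (r : ℕ) (p : ℚ → Fin r) :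
    ∃ i : Fin r, ∃ S : Set ℚ, (∀ q ∈ S, p q = i) ∧ Nonempty (ℚ ≃o S) := by
  -- `D i a b` : color `i` is dense in the interval `(a, b)`
  set D : Fin r → ℚ → ℚ → Prop :=
    fun i a b => ∀ x y, a ≤ x → x < y → y ≤ b → ∃ q, x < q ∧ q < y ∧ p q = i with hD
  -- Step 1: some color is dense in some nonempty interval
  have key : ∃ i a b, a < b ∧ D i a b := by
    by_contra h
    push_neg at h
    -- for every finite set of colors and every interval, find a subinterval avoiding them
    have shrink : ∀ (s : Finset (Fin r)) (a b : ℚ), a < b →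
        ∃ x y, a ≤ x ∧ x < y ∧ y ≤ b ∧ ∀ q, x < q → q < y → p q ∉ s := by
      intro s
      induction s using Finset.induction with
      | empty => intro a b hab; exact ⟨a, b, le_refl a, hab, le_refl b, by simp⟩
      | @insert i s hi ih =>
        intro a b hab
        obtain ⟨x, y, hax, hxy, hyb, havoid⟩ := ih a b hab
        have := h i x y hxy
        simp only [hD] at this
        push_neg at this
        obtain ⟨x', y', hxx', hx'y', hy'y, hno⟩ := this
        refine ⟨x', y', hax.trans hxx', hx'y', hy'y.trans hyb, ?_⟩
        intro q hq1 hq2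
        simp only [Finset.mem_insert]
        push_neg
        constructor
        · exact hno q hq1 hq2
        · exact havoid q (lt_of_le_of_lt hxx' hq1) (lt_of_lt_of_le hq2 hy'y)
    obtain ⟨x, y, _, hxy, _, havoid⟩ := shrink Finset.univ 0 1 one_pos
    exact havoid ((x + y) / 2) (by linarith) (by linarith) (Finset.mem_univ _)
  obtain ⟨i, a, b, hab, hdense⟩ := key
  refine ⟨i, {q | a < q ∧ q < b ∧ p q = i}, fun q hq => hq.2.2, ?_⟩
  set S : Set ℚ := {q | a < q ∧ q < b ∧ p q = i} with hS
  have mem_iff : ∀ q, q ∈ S ↔ a < q ∧ q < b ∧ p q = i := fun q => Iff.rfl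
  haveI : Nonempty S := by
    obtain ⟨q, hq1, hq2, hq3⟩ := hdense a b le_rfl hab le_rfl
    exact ⟨⟨q, hq1, hq2, hq3⟩⟩
  haveI : DenselyOrdered S := by
    constructor
    rintro ⟨q1, hq1⟩ ⟨q2, hq2⟩ h
    have hlt : q1 < q2 := h
    obtain ⟨q, h1, h2, h3⟩ := hdense q1 q2 hq1.1.le hlt hq2.2.1.le
    exact ⟨⟨q, hq1.1.trans h1, h2.trans hq2.2.1, h3⟩, h1, h2⟩
  haveI : NoMinOrder S := by
    constructor
    rintro ⟨q, hq⟩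
    obtain ⟨q', h1, h2, h3⟩ := hdense a q le_rfl hq.1 hq.2.1.le
    exact ⟨⟨q', h1, h2.trans hq.2.1, h3⟩, h2⟩
  haveI : NoMaxOrder S := by
    constructor
    rintro ⟨q, hq⟩
    obtain ⟨q', h1, h2, h3⟩ := hdense q b hq.1.le hq.2.1 le_rfl
    exact ⟨⟨q', hq.1.trans h1, h2, h3⟩, h1⟩
  exact Order.iso_of_countable_dense ℚ S
end

section
/- The Rado graph is indivisible: for every partition of the vertex set of the Rado graph into finitely many pieces, one of the pieces induces a subgraph isomorphic to the Rado graph. -/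
/-!
Two countable graphs with the extension property are isomorphic by a back-and-forth argument:
the extension property in `H` lets any finite partial isomorphism `G ⇀ H` be extended to a
prescribed vertex of `G`, and symmetrically. So it suffices to find a piece of the partition
which inherits the extension property. If no piece does, every piece `i` has a failing pair
`Aᵢ, Bᵢ`; a vertex `v` adjacent to all of `⋃ Aᵢ` and to none of `⋃ Bᵢ` then lies in some piece
`i` and witnesses the extension property for `Aᵢ, Bᵢ` after all.
-/

/-- The extension property characterizing the Rado graph: for any disjoint
finite sets `A`, `B` of vertices there is a vertex outside `A ∪ B` adjacent to
every vertex of `A` and to no vertex of `B`. -/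
def ExtensionProperty {V : Type*} (G : SimpleGraph V) : Prop :=
  ∀ A B : Finset V, Disjoint A B →
    ∃ v : V, v ∉ A ∧ v ∉ B ∧ (∀ a ∈ A, G.Adj v a) ∧ (∀ b ∈ B, ¬ G.Adj v b)

open Order

section BackAndForth

variable {α β : Type*} {G : SimpleGraph α} {H : SimpleGraph β}

namespace SimpleGraph

theorem nonempty_iso_of_rel (R : α → β → Prop) (h_left : ∀ a, ∃ b, R a b)
    (h_right : ∀ b, ∃ a, R a b)
    (hR : ∀ a a' b b', R a b → R a' b' → (a = a' ↔ b = b') ∧ (G.Adj a a' ↔ H.Adj b b')) :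
    Nonempty (G ≃g H) := by
  choose f hf using h_left
  have hinj : f.Injective := fun a a' h => ((hR _ _ _ _ (hf a) (hf a')).1.2 h)
  have hsurj : f.Surjective := fun b =>
    let ⟨a, ha⟩ := h_right b
    ⟨a, (hR _ _ _ _ (hf a) ha).1.1 rfl⟩
  exact ⟨⟨Equiv.ofBijective f ⟨hinj, hsurj⟩, (hR _ _ _ _ (hf _) (hf _)).2.symm⟩⟩

variable (G H) in
def FinPartialIso : Type _ :=
  { s : Finset (α × β) //
    ∀ p ∈ s, ∀ q ∈ s, (p.1 = q.1 ↔ p.2 = q.2) ∧ (G.Adj p.1 q.1 ↔ H.Adj p.2 q.2) }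

namespace FinPartialIso

instance : Preorder (FinPartialIso G H) := Subtype.preorder _

instance : Inhabited (FinPartialIso G H) := ⟨⟨∅, by simp⟩⟩

def symm (f : FinPartialIso G H) : FinPartialIso H G :=
  ⟨f.1.map (Equiv.prodComm α β).toEmbedding, by
    simp only [Finset.forall_mem_map]
    exact fun p hp q hq => ⟨(f.2 p hp q hq).1.symm, (f.2 p hp q hq).2.symm⟩⟩

protected def insert [DecidableEq α] [DecidableEq β] (f : FinPartialIso G H) (a : α) (b : β)
    (h : ∀ p ∈ f.1, (p.1 = a ↔ p.2 = b) ∧ (G.Adj p.1 a ↔ H.Adj p.2 b)) : FinPartialIso G H :=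
  ⟨insert (a, b) f.1, by
    simp only [Finset.forall_mem_insert]
    refine ⟨⟨⟨by simp, by simp⟩, fun q hq => ?_⟩, fun p hp => ⟨h p hp, f.2 p hp⟩⟩
    rw [G.adj_comm, H.adj_comm, eq_comm, @eq_comm _ b]
    exact h q hq⟩

theorem exists_across_left (hH : ExtensionProperty H) (f : FinPartialIso G H) (a : α) :
    ∃ b, ∀ p ∈ f.1, (p.1 = a ↔ p.2 = b) ∧ (G.Adj p.1 a ↔ H.Adj p.2 b) := by
  classical
  by_cases ha : ∃ b, (a, b) ∈ f.1
  · obtain ⟨b, hb⟩ := ha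
    exact ⟨b, fun p hp => f.2 p hp _ hb⟩
  push Not at ha
  set A := (f.1.filter fun p => G.Adj p.1 a).image Prod.snd
  set B := (f.1.filter fun p => ¬ G.Adj p.1 a).image Prod.snd
  have hAB : Disjoint A B := by
    simp only [A, B, Finset.disjoint_left, Finset.mem_image, Finset.mem_filter]
    rintro _ ⟨p, ⟨hp, hpa⟩, rfl⟩ ⟨q, ⟨hq, hqa⟩, hqp⟩
    exact hqa ((f.2 q hq p hp).1.2 hqp ▸ hpa)
  obtain ⟨b, hbA, hbB, hA, hB⟩ := hH A B hAB
  refine ⟨b, fun ⟨x, y⟩ hp => ?_⟩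
  have hxa : x ≠ a := by rintro rfl; exact ha y hp
  by_cases hadj : G.Adj x a
  · have hyA : y ∈ A := Finset.mem_image_of_mem _ (Finset.mem_filter.2 ⟨hp, hadj⟩)
    exact ⟨iff_of_false hxa (by rintro rfl; exact hbA hyA), iff_of_true hadj (hA y hyA).symm⟩
  · have hyB : y ∈ B := Finset.mem_image_of_mem _ (Finset.mem_filter.2 ⟨hp, hadj⟩)
    exact ⟨iff_of_false hxa (by rintro rfl; exact hbB hyB),
      iff_of_false hadj fun h => hB y hyB h.symm⟩

theorem exists_across_right (hG : ExtensionProperty G) (f : FinPartialIso G H) (b : β) :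
    ∃ a, ∀ p ∈ f.1, (p.1 = a ↔ p.2 = b) ∧ (G.Adj p.1 a ↔ H.Adj p.2 b) := by
  obtain ⟨a, ha⟩ := exists_across_left hG f.symm b
  simp only [symm, Finset.forall_mem_map] at ha
  exact ⟨a, fun p hp => ⟨(ha p hp).1.symm, (ha p hp).2.symm⟩⟩

variable (G) in
def definedAtLeft [DecidableEq α] [DecidableEq β] (hH : ExtensionProperty H) (a : α) :
    Cofinal (FinPartialIso G H) where
  carrier := {f | ∃ b, (a, b) ∈ f.1}
  isCofinal f :=
    let ⟨b, hb⟩ := exists_across_left hH f a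
    ⟨f.insert a b hb, ⟨b, Finset.mem_insert_self _ _⟩, Finset.subset_insert (a, b) f.1⟩

variable (H) in
def definedAtRight [DecidableEq α] [DecidableEq β] (hG : ExtensionProperty G) (b : β) :
    Cofinal (FinPartialIso G H) where
  carrier := {f | ∃ a, (a, b) ∈ f.1}
  isCofinal f :=
    let ⟨a, ha⟩ := exists_across_right hG f b
    ⟨f.insert a b ha, ⟨a, Finset.mem_insert_self _ _⟩, Finset.subset_insert (a, b) f.1⟩

theorem compat_of_mem_ideal (I : Ideal (FinPartialIso G H)) {f g : FinPartialIso G H}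
    (hf : f ∈ I) (hg : g ∈ I) {p q : α × β} (hp : p ∈ f.1) (hq : q ∈ g.1) :
    (p.1 = q.1 ↔ p.2 = q.2) ∧ (G.Adj p.1 q.1 ↔ H.Adj p.2 q.2) :=
  let ⟨m, _, hfm, hgm⟩ := I.directed f hf g hg
  m.2 p (hfm hp) q (hgm hq)

end FinPartialIso

end SimpleGraph

open SimpleGraph FinPartialIso in
theorem ExtensionProperty.nonempty_iso [Countable α] [Countable β] (hG : ExtensionProperty G)
    (hH : ExtensionProperty H) : Nonempty (G ≃g H) := by
  classical
  have := Encodable.ofCountable α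
  have := Encodable.ofCountable β
  let D : α ⊕ β → Cofinal (FinPartialIso G H) :=
    Sum.elim (definedAtLeft G hH) (definedAtRight H hG)
  have hD := cofinal_meets_idealOfCofinals default D
  refine nonempty_iso_of_rel (fun a b => ∃ f ∈ idealOfCofinals default D, (a, b) ∈ f.1)
    (fun a => ?_) (fun b => ?_) ?_
  · obtain ⟨f, ⟨b, hb⟩, hf⟩ := hD (.inl a)
    exact ⟨b, f, hf, hb⟩
  · obtain ⟨f, ⟨a, ha⟩, hf⟩ := hD (.inr b)
    exact ⟨a, f, hf, ha⟩
  · rintro a a' b b' ⟨f, hf, hab⟩ ⟨g, hg, hab'⟩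
    exact compat_of_mem_ideal _ hf hg hab hab'

end BackAndForth

def ExtensionPropertyWithin {V : Type*} (G : SimpleGraph V) (S : Set V) : Prop :=
  ∀ A B : Finset V, ↑A ⊆ S → ↑B ⊆ S → Disjoint A B →
    ∃ v ∈ S, v ∉ A ∧ v ∉ B ∧ (∀ a ∈ A, G.Adj v a) ∧ (∀ b ∈ B, ¬ G.Adj v b)

theorem ExtensionPropertyWithin.extensionProperty_induce {V : Type*} {G : SimpleGraph V}
    {S : Set V} (h : ExtensionPropertyWithin G S) : ExtensionProperty (G.induce S) := by
  intro A B hAB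
  obtain ⟨v, hvS, hvA, hvB, hA, hB⟩ := h (A.map (Function.Embedding.subtype _))
    (B.map (Function.Embedding.subtype _)) (by simp) (by simp) (by rwa [Finset.disjoint_map])
  refine ⟨⟨v, hvS⟩, fun ha => hvA ?_, fun hb => hvB ?_, fun a ha => hA a ?_,
    fun b hb => hB b ?_⟩ <;> exact Finset.mem_map_of_mem _ ‹_›

theorem ExtensionProperty.exists_extensionPropertyWithin_fiber {V ι : Type*} [Finite ι]
    {G : SimpleGraph V} (hG : ExtensionProperty G) (p : V → ι) :
    ∃ i, ExtensionPropertyWithin G (p ⁻¹' {i}) := by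
  classical
  have := Fintype.ofFinite ι
  by_contra! hfail
  simp only [ExtensionPropertyWithin, not_forall, not_exists, not_and, not_not] at hfail
  choose A B hAi hBi hAB hnot using hfail
  have hdisj : Disjoint (Finset.univ.biUnion A) (Finset.univ.biUnion B) := by
    simp only [Finset.disjoint_biUnion_left, Finset.disjoint_biUnion_right]
    intro j _ i _
    obtain rfl | hij := eq_or_ne i j
    · exact hAB i
    · exact Finset.disjoint_coe.1 <|
        Set.disjoint_of_subset (hAi i) (hBi j) ((Set.disjoint_singleton.2 hij).preimage p)
  obtain ⟨v, hvA, hvB, hA, hB⟩ := hG _ _ hdisj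
  simp only [Finset.mem_biUnion, Finset.mem_univ, true_and, not_exists] at hvA hvB hA hB
  obtain ⟨b, hb, hvb⟩ := hnot (p v) v rfl (hvA _) (hvB _) fun a ha => hA a ⟨_, ha⟩
  exact hB b ⟨_, hb⟩ hvb

/-- The Rado graph is indivisible: for any finite partition of the vertices of
the Rado graph (a countable graph with the extension property), some piece
induces a subgraph isomorphic to the whole graph. -/
theorem rado_indivisible {V : Type*} [Countable V] (G : SimpleGraph V)
    (hG : ExtensionProperty G) (r : ℕ) (p : V → Fin r) :
    ∃ i : Fin r, ∃ S : Set V, (∀ v ∈ S, p v = i) ∧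
      Nonempty ((G.induce S) ≃g G) := by
  obtain ⟨i, hi⟩ := hG.exists_extensionPropertyWithin_fiber p
  exact ⟨i, p ⁻¹' {i}, fun v hv => hv, hi.extensionProperty_induce.nonempty_iso hG⟩
end

section
/- Any countable graph satisfying the extension property is isomorphic to the Rado graph: if G and H are countable graphs such that for any disjoint finite vertex sets A, B in either graph there is a vertex joined to all of A and none of B, then G ≅ H. -/
open Function FirstOrder Language

/-- Makes the empty partial isomorphism `default : Language.graph.FGEquiv V W` available as the
starting point of the back-and-forth. -/
instance : IsEmpty (Language.graph.Relations 0) := ⟨fun r => nomatch r⟩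

namespace ExtensionProperty

variable {V W : Type*} {G : SimpleGraph V} {H : SimpleGraph W}

theorem exists_adj_iff (hH : ExtensionProperty H) {ι : Type*} [Finite ι] {f : ι → W}
    (hf : Injective f) (p : ι → Prop) : ∃ w ∉ Set.range f, ∀ i, H.Adj w (f i) ↔ p i := by
  classical
  have := Fintype.ofFinite ι
  let f' : ι ↪ W := ⟨f, hf⟩
  obtain ⟨w, hwA, hwB, hA, hB⟩ :=
    hH (Finset.univ.filter p |>.map f') (Finset.univ.filter (¬ p ·) |>.map f')
      ((Finset.disjoint_map f').2 (Finset.disjoint_filter_filter_not _ _ _))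
  have mem_map : ∀ (q : ι → Prop) [DecidablePred q] (i : ι),
      f i ∈ (Finset.univ.filter q).map f' ↔ q i := fun q _ i => by simp [f']
  refine ⟨w, ?_, fun i => ⟨fun hi => ?_, fun hi => hA _ ((mem_map p i).2 hi)⟩⟩
  · rintro ⟨i, rfl⟩
    by_cases hi : p i
    · exact hwA ((mem_map p i).2 hi)
    · exact hwB ((mem_map _ i).2 hi)
  · by_contra hi'
    exact hB _ ((mem_map _ i).2 hi') hi

theorem exists_extend (hH : ExtensionProperty H) {s : Set V} [Finite s] (f : G.induce s ↪g H)
    (m : V) : ∃ g : G.induce (insert m s : Set V) ↪g H, ∀ x : s,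
      g (Set.inclusion (Set.subset_insert m s) x) = f x := by
  classical
  obtain ⟨w, hw, hadj⟩ := hH.exists_adj_iff f.injective (fun x => G.Adj m x)
  let g : ↥(insert m s) → W := fun x => if h : (x : V) ∈ s then f ⟨x, h⟩ else w
  have eq_m : ∀ x : ↥(insert m s), (x : V) ∉ s → (x : V) = m := fun x hx =>
    x.2.resolve_right hx
  have hinj : Injective g := by
    intro x y hxy
    by_cases hx : (x : V) ∈ s <;> by_cases hy : (y : V) ∈ s <;>
      simp only [g, hx, hy, dif_pos, dif_neg, not_false_eq_true] at hxy
    · exact Subtype.ext (by simpa using f.injective hxy)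
    · exact absurd ⟨_, hxy⟩ hw
    · exact absurd ⟨_, hxy.symm⟩ hw
    · exact Subtype.ext ((eq_m x hx).trans (eq_m y hy).symm)
  refine ⟨⟨⟨g, hinj⟩, fun {x y} => ?_⟩, fun x => dif_pos x.2⟩
  simp only [SimpleGraph.comap_adj, Function.Embedding.coeFn_mk, Function.Embedding.subtype_apply]
  by_cases hx : (x : V) ∈ s <;> by_cases hy : (y : V) ∈ s <;>
    simp only [g, hx, hy, dif_pos, dif_neg, not_false_eq_true]
  · exact f.map_rel_iff
  · rw [eq_m y hy, H.adj_comm, G.adj_comm]; exact hadj _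
  · rw [eq_m x hx]; exact hadj _
  · simp [eq_m x hx, eq_m y hy]

theorem isExtensionPair (hH : ExtensionProperty H) :
    @IsExtensionPair Language.graph V W G.structure H.structure := by
  let := G.structure
  let := H.structure
  rw [isExtensionPair_iff_exists_embedding_closure_singleton_sup]
  intro S hS f m
  have : Finite S := hS.finite
  let f' : G.induce (S : Set V) ↪g H := ⟨f.toEmbedding, fun {a b} => f.map_rel adj ![a, b]⟩
  obtain ⟨g, hg⟩ := hH.exists_extend f' m
  have hT : ((Substructure.closure Language.graph {m} ⊔ S : Language.graph.Substructure V) :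
      Set V) = insert m (S : Set V) := by
    rw [← Substructure.closure_eq_of_isRelational Language.graph (insert m (S : Set V)),
      Substructure.closure_insert, Substructure.closure_eq]
  let g' := g.comp (SimpleGraph.induceHomOfLE G hT.le)
  refine ⟨⟨g'.toEmbedding, fun f => isEmptyElim f, ?_⟩, Embedding.ext fun x => (hg x).symm⟩
  rintro _ ⟨⟩ x
  exact g'.map_rel_iff (a := x 0) (b := x 1)

end ExtensionProperty

/-- Back-and-forth uniqueness of the Rado graph: any two countable graphs with
the extension property are isomorphic. -/
theorem rado_unique {V W : Type*} [Countable V] [Countable W]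
    (G : SimpleGraph V) (H : SimpleGraph W)
    (hG : ExtensionProperty G) (hH : ExtensionProperty H) :
    Nonempty (G ≃g H) := by
  let := G.structure
  let := H.structure
  obtain ⟨φ, -⟩ := equiv_between_cg Structure.cg_of_countable Structure.cg_of_countable
    default hH.isExtensionPair hG.isExtensionPair
  exact ⟨⟨φ.toEquiv, fun {a b} => φ.map_rel adj ![a, b]⟩⟩
end

section
/- Let T be a tree with coding nodes ⟨c_n : n < ω⟩ in 2^{<ω} with no maximal nodes that satisfies the K_k-Free Branching Criterion. Then no finite set of coding nodes of T codes a k-clique; i.e., there is no set {c_{n_0}, ..., c_{n_{k-1}}} with n_0 < ... < n_{k-1} such that c_{n_j}(|c_{n_i}|) = 1 for all i < j < k. -/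
/-- The coding nodes `c` (restricted to indices below the length bound given
by `t`) admit a pattern witnessing that a coding node extending `t⌢1` would
code a `k`-clique with coding nodes of length `≤ |t|`: there are indices
`m_0 < … < m_{k-2}` with `|c_{m_i}| ≤ |t|`, the nodes `c_{m_0}, …, c_{m_{k-2}}`
pairwise have passing number `1` (coding a `(k-1)`-clique), and `t⌢1` has
passing number `1` at each `c_{m_i}`. -/
def WouldCodeKClique (k : ℕ) (c : ℕ → List Bool) (t : List Bool) : Prop :=
  ∃ m : Fin (k - 1) → ℕ, StrictMono m ∧
    (∀ i, (c (m i)).length ≤ t.length) ∧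
    (∀ i j : Fin (k - 1), i < j →
      (c (m j)).getD (c (m i)).length false = true) ∧
    (∀ i, (t ++ [true]).getD (c (m i)).length false = true)

/-- `T` satisfies the `K_k`-Free Branching Criterion with respect to its
coding nodes `c`: for each node `t` of `T`, `t⌢0 ∈ T`, and `t⌢1 ∈ T` iff no
coding node extending `t⌢1` can code a `k`-clique with coding nodes of `T` of
length `≤ |t|`. -/
def KFreeBranchingCriterion (k : ℕ) (T : Set (List Bool)) (c : ℕ → List Bool) :
    Prop :=
  ∀ t ∈ T, (t ++ [false] ∈ T) ∧
    ((t ++ [true] ∈ T) ↔ ¬ WouldCodeKClique k c t)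

/-- If `T ⊆ 2^{<ω}` is a tree (closed under initial segments) with no maximal
nodes, with injective coding nodes `c_0, c_1, …` of strictly increasing
lengths, satisfying the `K_k`-Free Branching Criterion, then no finite set of
coding nodes of `T` codes a `k`-clique. -/
theorem kFBC_no_k_clique (k : ℕ) (hk : 3 ≤ k) (T : Set (List Bool))
    (hclosed : ∀ t ∈ T, ∀ s : List Bool, s <+: t → s ∈ T)
    (hnomax : ∀ t ∈ T, ∃ u ∈ T, t <+: u ∧ t ≠ u)
    (c : ℕ → List Bool) (hc : ∀ n, c n ∈ T) (hinj : Function.Injective c)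
    (hlen : ∀ m n : ℕ, m < n → (c m).length < (c n).length)
    (hfbc : KFreeBranchingCriterion k T c) :
    ¬ ∃ n : Fin k → ℕ, StrictMono n ∧
      ∀ i j : Fin k, i < j →
        (c (n j)).getD (c (n i)).length false = true := by
  rintro ⟨n, hmono, hcl⟩
  have hlenle : ∀ a b : ℕ, a ≤ b → (c a).length ≤ (c b).length := by
    intro a b hab
    rcases hab.lt_or_eq with h | h
    · exact (hlen a b h).le
    · simp [h]
  have hk1k : k - 1 ≤ k := Nat.sub_le k 1
  -- the embedding of the first k-1 indices
  let e : Fin (k - 1) → Fin k := Fin.castLE hk1k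
  have hemono : StrictMono e := Fin.strictMono_castLE hk1k
  have hplt : k - 1 < k := by omega
  let p : Fin k := ⟨k - 1, hplt⟩
  -- e i < p for all i
  have heplt : ∀ i : Fin (k - 1), e i < p := fun i => by
    have := i.2
    simp only [Fin.lt_def, e, Fin.coe_castLE, p]
    omega
  -- the last of the first k-1 indices
  have hq1 : k - 2 < k - 1 := by omega
  let q : Fin (k - 1) := ⟨k - 2, hq1⟩
  have hele : ∀ i : Fin (k - 1), e i ≤ e q := fun i => by
    have := i.2
    simp only [Fin.le_def, e, Fin.coe_castLE, q]
    omega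
  have hqp : e q < p := heplt q
  have hLlt : (c (n (e q))).length < (c (n p)).length := hlen _ _ (hmono hqp)
  have hget : (c (n p)).getD (c (n (e q))).length false = true := hcl _ _ hqp
  rw [List.getD_eq_getElem _ _ hLlt] at hget
  set L := (c (n (e q))).length with hLdef
  set t := (c (n p)).take L with ht
  have htlen : t.length = L := by
    rw [ht, List.length_take]; omega
  have hpre : t ++ [true] = (c (n p)).take (L + 1) := by
    rw [List.take_succ, ht]
    congr 1
    rw [List.getElem?_eq_getElem hLlt, hget]
    rfl
  have htT : t ++ [true] ∈ T := by
    refine hclosed _ (hc (n p)) _ ?_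
    rw [hpre]; exact List.take_prefix _ _
  have htmem : t ∈ T := hclosed _ htT t ⟨[true], rfl⟩
  have hnot : ¬ WouldCodeKClique k c t := ((hfbc t htmem).2).mp htT
  apply hnot
  have hle : ∀ i : Fin (k - 1), (c (n (e i))).length ≤ L :=
    fun i => hlenle _ _ (hmono.monotone (hele i))
  refine ⟨fun i => n (e i), hmono.comp hemono, ?_, ?_, ?_⟩
  · intro i; rw [htlen]; exact hle i
  · intro i j hij
    exact hcl _ _ (hemono hij)
  · intro i
    have hli := hle i
    have hv := hcl _ _ (heplt i)
    rw [List.getD_eq_getElem _ _ (hli.trans_lt hLlt)] at hv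
    rw [hpre, List.getD_eq_getElem _ _
      (by rw [List.length_take]; exact lt_min (Nat.lt_succ_of_le hli) (hli.trans_lt hLlt)),
      List.getElem_take]
    exact hv
end

section
/- Every vector space of countable infinite dimension over the two-element field 𝔽_2 is indivisible with respect to nontrivial vectors: for every partition of the nonzero vectors of the space into finitely many pieces, one piece contains all nonzero vectors of an infinite-dimensional subspace. This follows from Hindman's theorem on finite sums. -/
/-!
Over `𝔽₂` every vector of the span of a family is the sum of the family over a finite set of
indices, and a family is linearly independent iff no nonempty finite subfamily sums to `0`.
Hence the finite sums of a basis are exactly the nonzero vectors of the space, and Hindman's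
theorem applied to them gives a stream `b` whose finite sums all lie in one colour class of
nonzero vectors. Since `0` is not among them, `b` is linearly independent, so its span is
infinite-dimensional, and its nonzero vectors are exactly the finite sums of `b`.
-/

open Hindman

theorem Hindman.FS.exists_finset_sum_eq {M : Type*} [AddCommMonoid M] {a : Stream' M} {m : M}
    (hm : m ∈ FS a) : ∃ s : Finset ℕ, s.Nonempty ∧ ∑ i ∈ s, a.get i = m := by
  induction hm with
  | head' a => exact ⟨{0}, Finset.singleton_nonempty 0, Finset.sum_singleton _ _⟩
  | tail' a m _ ih =>
    obtain ⟨s, hs, rfl⟩ := ih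
    refine ⟨s.map (addRightEmbedding 1), hs.map, ?_⟩
    simp [Stream'.get_tail]
  | cons' a m _ ih =>
    obtain ⟨s, _, rfl⟩ := ih
    refine ⟨insert 0 (s.map (addRightEmbedding 1)), Finset.insert_nonempty _ _, ?_⟩
    rw [Finset.sum_insert (by simp)]
    simp [Stream'.get_tail]

theorem Submodule.not_finite_span_range_of_linearIndependent {R M ι : Type*} [Semiring R]
    [StrongRankCondition R] [AddCommMonoid M] [Module R M] [Infinite ι] {v : ι → M}
    (hv : LinearIndependent R v) : ¬ Module.Finite R (span R (Set.range v)) :=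
  fun _ => Module.Finite.not_linearIndependent_of_infinite _ (linearIndependent_span hv)

section CharTwo

variable {ι V : Type*} [AddCommGroup V] [Module (ZMod 2) V]

theorem Finset.sum_smul_eq_sum_filter_ne_zero (s : Finset ι) (g : ι → ZMod 2) (v : ι → V) :
    ∑ i ∈ s, g i • v i = ∑ i ∈ s with g i ≠ 0, v i := by
  rw [Finset.sum_filter]
  refine Finset.sum_congr rfl fun i _ => ?_
  rcases (by decide : ∀ x : ZMod 2, x = 0 ∨ x = 1) (g i) with h | h <;> simp [h]

theorem linearIndependent_iff_finset_sum_ne_zero {v : ι → V} :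
    LinearIndependent (ZMod 2) v ↔ ∀ s : Finset ι, s.Nonempty → ∑ i ∈ s, v i ≠ 0 := by
  rw [linearIndependent_iff']
  constructor
  · intro hv s ⟨i, hi⟩ hsum
    exact one_ne_zero (hv s (fun _ => 1) (by simpa using hsum) i hi)
  · intro hv s g hsum i hi
    by_contra hgi
    exact hv _ ⟨i, Finset.mem_filter.2 ⟨hi, hgi⟩⟩
      (by rwa [← Finset.sum_smul_eq_sum_filter_ne_zero])

theorem exists_finset_sum_eq_of_mem_span_range {v : ι → V} {x : V}
    (hx : x ∈ Submodule.span (ZMod 2) (Set.range v)) : ∃ s : Finset ι, ∑ i ∈ s, v i = x := by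
  obtain ⟨c, rfl⟩ := Finsupp.mem_span_range_iff_exists_finsupp.1 hx
  exact ⟨_, (Finset.sum_smul_eq_sum_filter_ne_zero c.support c v).symm⟩

theorem linearIndependent_iff_zero_notMem_FS {a : Stream' V} :
    LinearIndependent (ZMod 2) a.get ↔ 0 ∉ FS a := by
  rw [linearIndependent_iff_finset_sum_ne_zero]
  constructor
  · intro ha h0
    obtain ⟨s, hs, hsum⟩ := FS.exists_finset_sum_eq h0
    exact ha s hs hsum
  · intro ha s hs hsum
    exact ha (hsum ▸ FS.finsetSum a s hs)

theorem mem_FS_of_mem_span_range {a : Stream' V} {x : V}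
    (hx : x ∈ Submodule.span (ZMod 2) (Set.range a.get)) (hx0 : x ≠ 0) : x ∈ FS a := by
  obtain ⟨s, rfl⟩ := exists_finset_sum_eq_of_mem_span_range hx
  exact FS.finsetSum a s (Finset.nonempty_iff_ne_empty.2 fun hs => hx0 (by simp [hs]))

end CharTwo

/-- Indivisibility of the countable-dimensional vector space over `𝔽₂`
(a consequence of Hindman's theorem): for every partition of the nonzero
vectors of a vector space of countably infinite dimension over `ℤ/2` into
finitely many pieces, one piece contains all nonzero vectors of an
infinite-dimensional subspace. -/
theorem f2_vector_space_indivisible (V : Type*) [AddCommGroup V]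
    [Module (ZMod 2) V] (hdim : Nonempty (Module.Basis ℕ (ZMod 2) V))
    (r : ℕ) (p : V → Fin r) :
    ∃ i : Fin r, ∃ W : Submodule (ZMod 2) V,
      ¬ Module.Finite (ZMod 2) W ∧ ∀ v ∈ W, v ≠ 0 → p v = i := by
  obtain ⟨e⟩ := hdim
  have hcover : FS (⇑e : Stream' V) ⊆ ⋃₀ Set.range fun i : Fin r => p ⁻¹' {i} \ {0} := by
    intro m hm
    have hm0 : m ≠ 0 := by
      rintro rfl
      exact linearIndependent_iff_zero_notMem_FS.1 e.linearIndependent hm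
    exact ⟨_, ⟨p m, rfl⟩, rfl, hm0⟩
  obtain ⟨_, ⟨i, rfl⟩, b, hb⟩ := FS_partition_regular _ _ (Set.finite_range _) hcover
  have hb_indep : LinearIndependent (ZMod 2) b.get :=
    linearIndependent_iff_zero_notMem_FS.2 fun h0 => (hb h0).2 rfl
  exact ⟨i, Submodule.span (ZMod 2) (Set.range b.get),
    Submodule.not_finite_span_range_of_linearIndependent hb_indep,
    fun v hv hv0 => (hb (mem_FS_of_mem_span_range hv hv0)).1⟩
end
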